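/- arXiv:1310.1543 — 11 statements merged into one kernel-verified Lean document; each statement's English description precedes it below -/
import Mathlib

section
/- The set H_n = 2H + nℕ₀ = {2h + ni : h ∈ H, i ∈ ℕ₀} is a numerical semigroup whose smallest positive element is 2m, whenever H is a numerical semigroup with smallest positive element m and n is an odd integer with n > 2m. -/
/-- A numerical semigroup: a submonoid of ℕ with finite complement. -/
structure NumSemigroup where
  carrier : Set ℕ
  zero_mem : 0 ∈ carrier
  add_mem : ∀ a ∈ carrier, ∀ b ∈ carrier, a + b ∈ carrier
  cofinite : carrierᶜ.Finite

namespace NumSemigroup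

/-- The genus: cardinality of the complement in ℕ. -/
noncomputable def genus (H : NumSemigroup) : ℕ := H.carrierᶜ.ncard

/-- `m` is the least positive element of `H` (so `H` is an `m`-semigroup). -/
def IsMult (H : NumSemigroup) (m : ℕ) : Prop :=
  IsLeast {x | x ∈ H.carrier ∧ 0 < x} m

/-- `c` is the conductor: the least `c` with `c + ℕ ⊆ H`. -/
def IsConductor (H : NumSemigroup) (c : ℕ) : Prop :=
  IsLeast {c | ∀ x, c ≤ x → x ∈ H.carrier} c

/-- `n` is the least odd element of `H`, i.e. `n = n(H)`. -/
def IsLeastOdd (H : NumSemigroup) (n : ℕ) : Prop :=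
  IsLeast {x | x ∈ H.carrier ∧ Odd x} n

end NumSemigroup

/-- `d₂(A) = {h/2 : h ∈ A even}`. -/
def d2 (A : Set ℕ) : Set ℕ := {x | 2 * x ∈ A}

/-- `2A + nℕ₀ = {2h + ni : h ∈ A, i ∈ ℕ₀}`. -/
def doubleAdd (A : Set ℕ) (n : ℕ) : Set ℕ :=
  {x | ∃ h ∈ A, ∃ i : ℕ, x = 2 * h + n * i}

/-- `2A + aℕ₀ + bℕ₀ = {2h + ai + bj : h ∈ A, i, j ∈ ℕ₀}`. -/
def doubleAdd2 (A : Set ℕ) (a b : ℕ) : Set ℕ :=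
  {x | ∃ h ∈ A, ∃ i : ℕ, ∃ j : ℕ, x = 2 * h + a * i + b * j}

/-- The standard basis `S(A) = {m, s₁, …, s_{m-1}}` of an `m`-semigroup,
where `sᵢ = min {h ∈ A : h ≡ i mod m}`. -/
def stdBasis (A : Set ℕ) (m : ℕ) : Set ℕ :=
  insert m {s | ∃ i, 0 < i ∧ i < m ∧ IsLeast {h | h ∈ A ∧ h % m = i} s}

/-- `A` (of genus `g`) is symmetric: `z ∈ A ↔ 2g - 1 - z ∉ A` for all integers `z`. -/
def SymSgp (A : Set ℕ) (g : ℕ) : Prop :=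
  ∀ z : ℤ, (∃ a ∈ A, (a : ℤ) = z) ↔ ¬ ∃ a ∈ A, (a : ℤ) = 2 * (g : ℤ) - 1 - z

/-- The submonoid of ℕ generated by a set, as a set: `⟨a₁,…,a_k⟩`. -/
def genSG (s : Set ℕ) : Set ℕ := (AddSubmonoid.closure s : AddSubmonoid ℕ)

theorem stmt0 (H : NumSemigroup) (m n : ℕ)
    (hm : H.IsMult m) (hodd : Odd n) (hn : 2 * m < n) :
    0 ∈ doubleAdd H.carrier n ∧
    (∀ a ∈ doubleAdd H.carrier n, ∀ b ∈ doubleAdd H.carrier n,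
      a + b ∈ doubleAdd H.carrier n) ∧
    (doubleAdd H.carrier n)ᶜ.Finite ∧
    IsLeast {x | x ∈ doubleAdd H.carrier n ∧ 0 < x} (2 * m) := by
  obtain ⟨hmH, hmpos⟩ := hm.1
  have hmlb := hm.2
  refine ⟨⟨0, H.zero_mem, 0, by ring⟩, ?_, ?_, ?_⟩
  · rintro a ⟨h, hh, i, rfl⟩ b ⟨h', hh', i', rfl⟩
    exact ⟨h + h', H.add_mem _ hh _ hh', i + i', by ring⟩
  · obtain ⟨c, hc⟩ := H.cofinite.bddAbove
    have hc' : ∀ x, c < x → x ∈ H.carrier := by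
      intro x hx
      by_contra hxn
      exact absurd (hc hxn) (not_le.mpr hx)
    apply Set.Finite.subset (Set.finite_Iio (2*c + n + 2))
    intro x hx
    by_contra hxge
    simp only [Set.mem_Iio, not_lt] at hxge
    apply hx
    rcases Nat.even_or_odd x with he | ho
    · obtain ⟨k, hk⟩ := he
      exact ⟨k, hc' k (by omega), 0, by omega⟩
    · obtain ⟨k, hk⟩ := ho
      obtain ⟨j, hj⟩ := hodd
      exact ⟨k - j, hc' _ (by omega), 1, by omega⟩
  · constructor
    · exact ⟨⟨m, hmH, 0, by ring⟩, by omega⟩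
    · rintro x ⟨⟨h, hh, i, rfl⟩, hpos⟩
      rcases Nat.eq_zero_or_pos i with rfl | hi
      · have hhpos : 0 < h := by omega
        have := hmlb ⟨hh, hhpos⟩
        omega
      · have : n ≤ n * i := Nat.le_mul_of_pos_right n hi
        omega
end

section
/- Let H be an m-semigroup and n an odd integer with n > c(H) + m − 2 and n > 2m. Then the genus of the numerical semigroup H_n = 2H + nℕ₀ equals 2·g(H) + (n−1)/2. -/
theorem stmt1 (H : NumSemigroup) (m c n : ℕ)
    (hm : H.IsMult m) (hc : H.IsConductor c) (hodd : Odd n)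
    (h1 : c + m - 2 < n) (h2 : 2 * m < n) :
    (doubleAdd H.carrier n)ᶜ.ncard = 2 * H.genus + (n - 1) / 2 := by
  obtain ⟨nn, hnn⟩ := hodd
  have hm1 : 1 ≤ m := hm.1.2
  have hnK : n ∈ H.carrier := hc.1 n (by omega)
  set K := H.carrier with hKdef
  have h0K : 0 ∈ K := H.zero_mem
  -- closure under adding multiples of n
  have habs : ∀ j h, h ∈ K → h + n * j ∈ K := by
    intro j
    induction j with
    | zero => simp
    | succ j ih =>
      intro h hh
      have := H.add_mem _ (ih h hh) _ hnK
      have heq : h + n * j + n = h + n * (j + 1) := by ring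
      rwa [heq] at this
  -- even membership
  have heven : ∀ x, 2 * x ∈ doubleAdd K n ↔ x ∈ K := by
    intro x
    constructor
    · rintro ⟨h, hh, i, hi⟩
      obtain ⟨j, hj⟩ : ∃ j, i = 2 * j := by
        rcases Nat.even_or_odd i with he | ho
        · obtain ⟨a, ha⟩ := he; exact ⟨a, by omega⟩
        · exfalso; obtain ⟨b, hb⟩ := ho
          have hkey : 2 * x = 2 * (h + n * b) + n := by rw [hi, hb]; ring
          omega
      have hkey : 2 * x = 2 * (h + n * j) := by rw [hi, hj]; ring
      have hx : x = h + n * j := by omega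
      rw [hx]; exact habs j h hh
    · intro hx; exact ⟨x, hx, 0, by ring⟩
  -- odd membership
  have hoddmem : ∀ w, Odd w → (w ∈ doubleAdd K n ↔ ∃ x ∈ K, w = n + 2 * x) := by
    intro w hw
    constructor
    · rintro ⟨h, hh, i, hi⟩
      obtain ⟨k, hk⟩ := hw
      obtain ⟨j, hj⟩ : ∃ j, i = 2 * j + 1 := by
        rcases Nat.even_or_odd i with he | ho
        · exfalso; obtain ⟨a, ha⟩ := he
          have hkey : w = 2 * (h + n * a) := by rw [hi, ha]; ring
          omega
        · obtain ⟨b, hb⟩ := ho; exact ⟨b, by omega⟩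
      refine ⟨h + n * j, habs j h hh, ?_⟩
      rw [hi, hj]; ring
    · rintro ⟨x, hx, rfl⟩
      exact ⟨x, hx, 1, by ring⟩
  -- complement decomposition
  set A : Set ℕ := (fun x => 2 * x) '' Kᶜ with hA
  set B : Set ℕ := (fun k => 2 * k + 1) '' Set.Iio ((n - 1) / 2) with hB
  set C : Set ℕ := (fun x => n + 2 * x) '' Kᶜ with hC
  have hcompl : (doubleAdd K n)ᶜ = (A ∪ B) ∪ C := by
    ext w
    simp only [Set.mem_compl_iff, Set.mem_union, hA, hB, hC, Set.mem_image,
      Set.mem_Iio, Set.mem_compl_iff]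
    constructor
    · intro hw
      rcases Nat.even_or_odd w with he | ho
      · obtain ⟨x, hx⟩ := he
        left; left
        refine ⟨x, fun hxK => hw ?_, by omega⟩
        have := (heven x).2 hxK
        have hwx : w = 2 * x := by omega
        rwa [hwx]
      · obtain ⟨k, hk⟩ := ho
        by_cases hlt : w < n
        · left; right
          exact ⟨k, by omega, by omega⟩
        · right
          have hwn : Odd w := ⟨k, hk⟩
          refine ⟨(w - n) / 2, fun hxK => hw ?_, by omega⟩
          exact (hoddmem w hwn).2 ⟨(w - n) / 2, hxK, by omega⟩
    · rintro ((⟨x, hx, rfl⟩ | ⟨k, hk, rfl⟩) | ⟨x, hx, rfl⟩) hw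
      · exact hx ((heven x).1 hw)
      · obtain ⟨y, hy, hey⟩ := (hoddmem _ ⟨k, by ring⟩).1 hw
        have hey' : 2 * k + 1 = n + 2 * y := hey
        omega
      · have : Odd (n + 2 * x) := ⟨nn + x, by omega⟩
        obtain ⟨y, hy, hey⟩ := (hoddmem _ this).1 hw
        have hey' : n + 2 * x = n + 2 * y := hey
        have : x = y := by omega
        exact hx (this ▸ hy)
  -- finiteness
  have hfinK : Kᶜ.Finite := H.cofinite
  have hfA : A.Finite := hfinK.image _
  have hfB : B.Finite := (Set.finite_Iio _).image _
  have hfC : C.Finite := hfinK.image _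
  -- disjointness
  have hdAB : Disjoint A B := by
    rw [Set.disjoint_left]
    rintro w ⟨x, hx, rfl⟩ ⟨k, hk, hke⟩
    have hke' : 2 * k + 1 = 2 * x := hke
    omega
  have hdABC : Disjoint (A ∪ B) C := by
    rw [Set.disjoint_left]
    rintro w (⟨x, hx, rfl⟩ | ⟨k, hk, rfl⟩) ⟨y, hy, hye⟩
    · have hye' : n + 2 * y = 2 * x := hye
      omega
    · have hye' : n + 2 * y = 2 * k + 1 := hye
      have hy0 : y ≠ 0 := fun h => hy (h ▸ h0K)
      have hk' : k < (n - 1) / 2 := hk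
      omega
  -- cardinalities
  have hinjA : A.ncard = Kᶜ.ncard :=
    Set.ncard_image_of_injective _ (fun a b h => by omega)
  have hinjC : C.ncard = Kᶜ.ncard :=
    Set.ncard_image_of_injective _ (fun a b h => by omega)
  have hBcard : B.ncard = (n - 1) / 2 := by
    rw [hB, Set.ncard_image_of_injective _ (fun a b h => by dsimp only at h; omega : Function.Injective (fun k => 2 * k + 1))]
    rw [← Finset.coe_Iio, Set.ncard_coe_finset, Nat.card_Iio]
  rw [hcompl, Set.ncard_union_eq hdABC (hfA.union hfB) hfC,
    Set.ncard_union_eq hdAB hfA hfB, hinjA, hinjC, hBcard]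
  have : H.genus = Kᶜ.ncard := rfl
  omega
end

section
/- Let H be an m-semigroup with standard basis S(H) = {m, s₁, …, s_{m−1}}, and let n be an odd integer with n > c(H) + m − 2 and n > 2m. Then the standard basis of the 2m-semigroup H_n = 2H + nℕ₀ is {2m, 2s₁, …, 2s_{m−1}, n, n + 2s₁, …, n + 2s_{m−1}}. -/
private lemma nmul_mem (H : NumSemigroup) {n : ℕ} (hn : n ∈ H.carrier) {h : ℕ}
    (hh : h ∈ H.carrier) : ∀ k : ℕ, h + n * k ∈ H.carrier := by
  intro k
  induction k with
  | zero => simpa using hh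
  | succ k ih =>
      have : h + n * (k + 1) = (h + n * k) + n := by ring
      rw [this]
      exact H.add_mem _ ih _ hn

private lemma decompEven (H : NumSemigroup) {n : ℕ} (hodd : Odd n) (hnH : n ∈ H.carrier)
    {x : ℕ} (hx : x ∈ doubleAdd H.carrier n) (hxe : x % 2 = 0) :
    ∃ h ∈ H.carrier, x = 2 * h := by
  obtain ⟨h, hh, i, rfl⟩ := hx
  have hn2 : (n * i) % 2 = i % 2 := by
    rw [Nat.mul_mod, Nat.odd_iff.mp hodd]; simp [Nat.mod_mod]
  obtain ⟨k, rfl⟩ : ∃ k, i = 2 * k := ⟨i / 2, by omega⟩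
  exact ⟨h + n * k, nmul_mem H hnH hh k, by ring⟩

private lemma decompOdd (H : NumSemigroup) {n : ℕ} (hodd : Odd n) (hnH : n ∈ H.carrier)
    {x : ℕ} (hx : x ∈ doubleAdd H.carrier n) (hxe : x % 2 = 1) :
    ∃ h ∈ H.carrier, x = n + 2 * h := by
  obtain ⟨h, hh, i, rfl⟩ := hx
  have hn2 : (n * i) % 2 = i % 2 := by
    rw [Nat.mul_mod, Nat.odd_iff.mp hodd]; simp [Nat.mod_mod]
  obtain ⟨k, rfl⟩ : ∃ k, i = 2 * k + 1 := ⟨i / 2, by omega⟩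
  exact ⟨h + n * k, nmul_mem H hnH hh k, by ring⟩

theorem stmt2 (H : NumSemigroup) (m c n : ℕ) (s : ℕ → ℕ)
    (hm : H.IsMult m) (hc : H.IsConductor c) (hodd : Odd n)
    (h1 : c + m - 2 < n) (h2 : 2 * m < n)
    (hs : ∀ i, 0 < i → i < m → IsLeast {h | h ∈ H.carrier ∧ h % m = i} (s i)) :
    stdBasis (doubleAdd H.carrier n) (2 * m) =
      insert (2 * m) (insert n
        {x | ∃ i, 0 < i ∧ i < m ∧ (x = 2 * s i ∨ x = n + 2 * s i)}) := by
  have hm0 : 0 < m := hm.1.2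
  have hnH : n ∈ H.carrier := hc.1 n (by omega)
  have hoddn : n % 2 = 1 := Nat.odd_iff.mp hodd
  ext x
  simp only [stdBasis, Set.mem_insert_iff, Set.mem_setOf_eq]
  constructor
  · rintro (rfl | ⟨i, hi0, him, hL⟩)
    · exact Or.inl rfl
    obtain ⟨hxH, hxi⟩ := hL.1
    rcases Nat.mod_two_eq_zero_or_one x with hx | hx
    · -- even case
      obtain ⟨h, hh, rfl⟩ := decompEven H hodd hnH hxH hx
      have hmod : (2 * h) % (2 * m) = 2 * (h % m) := Nat.mul_mod_mul_left 2 h m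
      set j := h % m with hj
      have hj0 : 0 < j := by omega
      have hjm : j < m := Nat.mod_lt _ hm0
      have hsj := hs j hj0 hjm
      have le1 : s j ≤ h := hsj.2 ⟨hh, rfl⟩
      have le2 : 2 * h ≤ 2 * s j := by
        apply hL.2
        refine ⟨⟨s j, hsj.1.1, 0, by ring⟩, ?_⟩
        rw [Nat.mul_mod_mul_left, hsj.1.2]
        omega
      exact Or.inr (Or.inr ⟨j, hj0, hjm, Or.inl (by omega)⟩)
    · -- odd case
      obtain ⟨h, hh, rfl⟩ := decompOdd H hodd hnH hxH hx
      rcases Nat.eq_zero_or_pos (h % m) with hj0 | hj0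
      · -- x = n
        obtain ⟨q, hq⟩ : m ∣ h := Nat.dvd_of_mod_eq_zero hj0
        have le1 : n + 2 * h ≤ n := by
          apply hL.2
          refine ⟨⟨0, H.zero_mem, 1, by ring⟩, ?_⟩
          rw [← hxi, hq]
          have : n + 2 * (m * q) = n + (2 * m) * q := by ring
          rw [this, Nat.add_mul_mod_self_left]
        exact Or.inr (Or.inl (by omega))
      · -- x = n + 2 s j
        set j := h % m with hj
        have hjm : j < m := Nat.mod_lt _ hm0
        have hsj := hs j hj0 hjm
        have le1 : s j ≤ h := hsj.2 ⟨hh, rfl⟩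
        have le2 : n + 2 * h ≤ n + 2 * s j := by
          apply hL.2
          refine ⟨⟨s j, hsj.1.1, 1, by ring⟩, ?_⟩
          rw [← hxi]
          have : (2 * s j) % (2 * m) = (2 * h) % (2 * m) := by
            rw [Nat.mul_mod_mul_left, Nat.mul_mod_mul_left, hsj.1.2]
          exact Nat.ModEq.add (Nat.ModEq.refl n) this
        exact Or.inr (Or.inr ⟨j, hj0, hjm, Or.inr (by omega)⟩)
  · rintro (rfl | hxn | ⟨j, hj0, hjm, (rfl | rfl)⟩)
    · exact Or.inl rfl
    · -- x = n
      rw [hxn]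
      refine Or.inr ⟨n % (2 * m), ?_, Nat.mod_lt _ (by omega), ⟨⟨0, H.zero_mem, 1, by ring⟩, rfl⟩, ?_⟩
      · have : n % (2 * m) % 2 = n % 2 := Nat.mod_mod_of_dvd n ⟨m, by ring⟩
        omega
      · rintro y ⟨hyH, hyi⟩
        have hy2 : y % 2 = 1 := by
          have h1 : y % (2 * m) % 2 = y % 2 := Nat.mod_mod_of_dvd y ⟨m, by ring⟩
          have h2 : n % (2 * m) % 2 = n % 2 := Nat.mod_mod_of_dvd n ⟨m, by ring⟩
          omega
        obtain ⟨h', hh', rfl⟩ := decompOdd H hodd hnH hyH hy2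
        omega
    · -- x = 2 * s j
      have hsj := hs j hj0 hjm
      refine Or.inr ⟨2 * j, by omega, by omega, ⟨⟨s j, hsj.1.1, 0, by ring⟩, ?_⟩, ?_⟩
      · rw [Nat.mul_mod_mul_left, hsj.1.2]
      · rintro y ⟨hyH, hyi⟩
        have hy2 : y % 2 = 0 := by
          have h1 : y % (2 * m) % 2 = y % 2 := Nat.mod_mod_of_dvd y ⟨m, by ring⟩
          omega
        obtain ⟨h', hh', rfl⟩ := decompEven H hodd hnH hyH hy2
        rw [Nat.mul_mod_mul_left] at hyi
        have : s j ≤ h' := hsj.2 ⟨hh', by omega⟩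
        omega
    · -- x = n + 2 * s j
      have hsj := hs j hj0 hjm
      refine Or.inr ⟨(n + 2 * s j) % (2 * m), ?_, Nat.mod_lt _ (by omega),
        ⟨⟨s j, hsj.1.1, 1, by ring⟩, rfl⟩, ?_⟩
      · have : (n + 2 * s j) % (2 * m) % 2 = (n + 2 * s j) % 2 :=
          Nat.mod_mod_of_dvd _ ⟨m, by ring⟩
        omega
      · rintro y ⟨hyH, hyi⟩
        have hy2 : y % 2 = 1 := by
          have h1 : y % (2 * m) % 2 = y % 2 := Nat.mod_mod_of_dvd y ⟨m, by ring⟩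
          have h2 : (n + 2 * s j) % (2 * m) % 2 = (n + 2 * s j) % 2 :=
            Nat.mod_mod_of_dvd _ ⟨m, by ring⟩
          omega
        obtain ⟨h', hh', rfl⟩ := decompOdd H hodd hnH hyH hy2
        have hc' : (2 * h') % (2 * m) = (2 * s j) % (2 * m) :=
          Nat.ModEq.add_left_cancel' n hyi
        rw [Nat.mul_mod_mul_left, Nat.mul_mod_mul_left, hsj.1.2] at hc'
        have : s j ≤ h' := hsj.2 ⟨hh', by omega⟩
        omega
end

section
/- Let H be an m-semigroup and H̃ a numerical semigroup with d₂(H̃) = H. Let n be the least odd element of H̃. If n ≥ c(H) + m − 1 and n ≠ 2m − 1, then g(H) + (n−1)/2 ≤ g(H̃) ≤ 2·g(H) + (n−1)/2. -/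
theorem stmt4 (H Ht : NumSemigroup) (m c n : ℕ)
    (hm : H.IsMult m) (hc : H.IsConductor c)
    (hd : d2 Ht.carrier = H.carrier) (hn : Ht.IsLeastOdd n)
    (h1 : c + m - 1 ≤ n) (h2 : n ≠ 2 * m - 1) :
    H.genus + (n - 1) / 2 ≤ Ht.genus ∧
    Ht.genus ≤ 2 * H.genus + (n - 1) / 2 := by
  classical
  obtain ⟨⟨hnMem, hnOdd⟩, hnLeast⟩ := hn
  have hG : H.carrierᶜ.Finite := H.cofinite
  have hGt : Ht.carrierᶜ.Finite := Ht.cofinite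
  have hmem2 : ∀ k, 2 * k ∈ Ht.carrier ↔ k ∈ H.carrier := by
    intro k
    rw [← hd]; rfl
  obtain ⟨t, ht⟩ := hnOdd
  set A := (fun k => 2 * k) '' H.carrierᶜ with hA
  set B := {x | Odd x ∧ x < n} with hB
  set C := (fun k => n + 2 * k) '' H.carrierᶜ with hC
  have hmemA : ∀ x, x ∈ A ↔ ∃ k, k ∉ H.carrier ∧ 2 * k = x := by
    intro x; rw [hA]; simp [Set.mem_image]
  have hmemC : ∀ x, x ∈ C ↔ ∃ k, k ∉ H.carrier ∧ n + 2 * k = x := by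
    intro x; rw [hC]; simp [Set.mem_image]
  have hgenH : H.genus = H.carrierᶜ.ncard := rfl
  have hgenT : Ht.genus = Ht.carrierᶜ.ncard := rfl
  have hAcard : A.ncard = H.genus :=
    Set.ncard_image_of_injective _ (fun a b h => by omega)
  have hCcard : C.ncard = H.genus :=
    Set.ncard_image_of_injective _ (fun a b h => by omega)
  have hBeq : B = (fun j => 2 * j + 1) '' Set.Iio t := by
    ext x
    simp only [hB, Set.mem_setOf_eq, Set.mem_image, Set.mem_Iio]
    constructor
    · rintro ⟨⟨j, hj⟩, hlt⟩
      exact ⟨j, by omega, by omega⟩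
    · rintro ⟨j, hj, rfl⟩
      exact ⟨⟨j, by omega⟩, by omega⟩
  have hIio : (Set.Iio t).ncard = t := by
    rw [← Finset.coe_range, Set.ncard_coe_finset, Finset.card_range]
  have hBcard : B.ncard = (n - 1) / 2 := by
    rw [hBeq, Set.ncard_image_of_injective _ (fun a b h => by omega), hIio]
    omega
  have hAfin : A.Finite := hG.image _
  have hCfin : C.Finite := hG.image _
  have hBfin : B.Finite := by
    apply Set.Finite.subset (Set.finite_Iio n)
    rintro x ⟨_, hx⟩; exact hx
  have hAsub : A ⊆ Ht.carrierᶜ := by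
    intro x hx
    obtain ⟨k, hk, rfl⟩ := (hmemA x).mp hx
    intro hxm
    exact hk ((hmem2 k).mp hxm)
  have hBsub : B ⊆ Ht.carrierᶜ := by
    rintro x ⟨hodd, hlt⟩ hx
    exact absurd (hnLeast ⟨hx, hodd⟩) (by omega)
  have hdisj : Disjoint A B := by
    rw [Set.disjoint_left]
    intro x hxA hxB
    obtain ⟨k, -, rfl⟩ := (hmemA x).mp hxA
    obtain ⟨⟨j, hj⟩, -⟩ := hxB
    omega
  constructor
  · have hsub : A ∪ B ⊆ Ht.carrierᶜ := Set.union_subset hAsub hBsub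
    have hle := Set.ncard_le_ncard hsub hGt
    rw [Set.ncard_union_eq hdisj hAfin hBfin, hAcard, hBcard] at hle
    omega
  · have hsub : Ht.carrierᶜ ⊆ A ∪ B ∪ C := by
      intro x hx
      rcases Nat.even_or_odd x with ⟨k, hk⟩ | hodd
      · left; left
        refine (hmemA x).mpr ⟨k, ?_, by omega⟩
        intro hkH
        have hmem := (hmem2 k).mpr hkH
        rw [show 2 * k = x by omega] at hmem
        exact hx hmem
      · by_cases hlt : x < n
        · left; right; exact ⟨hodd, hlt⟩
        · right
          obtain ⟨j, hj⟩ := hodd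
          refine (hmemC x).mpr ⟨(x - n) / 2, ?_, by omega⟩
          intro hkH
          have h2k : 2 * ((x - n) / 2) ∈ Ht.carrier := (hmem2 _).mpr hkH
          have hsum : n + 2 * ((x - n) / 2) ∈ Ht.carrier :=
            Ht.add_mem n hnMem _ h2k
          rw [show n + 2 * ((x - n) / 2) = x by omega] at hsum
          exact hx hsum
    have h1' := Set.ncard_le_ncard hsub ((hAfin.union hBfin).union hCfin)
    have h2' := Set.ncard_union_le (A ∪ B) C
    have h3' := Set.ncard_union_le A B
    omega
end

section
/- Let H be an m-semigroup and H̃ a numerical semigroup with d₂(H̃) = H and n = n(H̃) ≥ c(H) + m − 1, n ≠ 2m − 1. Then g(H̃) = 2·g(H) + (n−1)/2 if and only if H̃ = 2H + nℕ₀. -/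
lemma doubleAdd_mem_iff (A : Set ℕ) (c n : ℕ) (hA : ∀ x, c ≤ x → x ∈ A)
    (hnc : c ≤ n) (x : ℕ) :
    x ∈ doubleAdd A n ↔ (∃ h ∈ A, x = 2 * h) ∨ (∃ h ∈ A, x = n + 2 * h) := by
  constructor
  · rintro ⟨h, hh, i, rfl⟩
    rcases Nat.even_or_odd i with ⟨k, hk⟩ | ⟨k, hk⟩
    · rcases Nat.eq_zero_or_pos k with rfl | hkpos
      · exact Or.inl ⟨h, hh, by subst hk; simp⟩
      · refine Or.inl ⟨h + n * k, hA _ ?_, by subst hk; ring⟩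
        nlinarith
    · rcases Nat.eq_zero_or_pos k with rfl | hkpos
      · exact Or.inr ⟨h, hh, by subst hk; ring⟩
      · refine Or.inr ⟨h + n * k, hA _ (by nlinarith), by subst hk; ring⟩
  · rintro (⟨h, hh, rfl⟩ | ⟨h, hh, rfl⟩)
    · exact ⟨h, hh, 0, by ring⟩
    · exact ⟨h, hh, 1, by ring⟩

lemma compl_doubleAdd (A : Set ℕ) (c n : ℕ) (hA : ∀ x, c ≤ x → x ∈ A)
    (hnc : c ≤ n) (hodd : Odd n) :
    (doubleAdd A n)ᶜ =
      (fun h => 2 * h) '' Aᶜ ∪ ((fun h => n + 2 * h) '' Aᶜ ∪ {x | Odd x ∧ x < n}) := by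
  obtain ⟨j, hj⟩ := hodd
  ext x
  simp only [Set.mem_compl_iff, doubleAdd_mem_iff A c n hA hnc, Set.mem_union,
    Set.mem_image, Set.mem_setOf_eq, not_or, not_exists]
  constructor
  · rintro ⟨hx1, hx2⟩
    push_neg at hx1 hx2
    rcases Nat.even_or_odd x with ⟨t, ht⟩ | hxodd
    · refine Or.inl ⟨t, fun htA => hx1 t htA (by omega), by omega⟩
    · obtain ⟨t, ht⟩ := hxodd
      by_cases hlt : x < n
      · exact Or.inr (Or.inr ⟨⟨t, ht⟩, hlt⟩)
      · refine Or.inr (Or.inl ⟨t - j, fun hs => hx2 _ hs (by omega), by omega⟩)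
  · rintro (⟨t, ht, rfl⟩ | ⟨t, ht, rfl⟩ | ⟨⟨t, ht⟩, hlt⟩) <;>
      refine ⟨?_, ?_⟩ <;> rintro h ⟨hh, heq⟩
    · exact ht (by rw [show t = h by omega]; exact hh)
    · omega
    · omega
    · exact ht (by rw [show t = h by omega]; exact hh)
    · omega
    · omega

lemma ncard_compl_doubleAdd (A : Set ℕ) (c n : ℕ) (hA : ∀ x, c ≤ x → x ∈ A)
    (hnc : c ≤ n) (hodd : Odd n) (hfin : Aᶜ.Finite) :
    (doubleAdd A n)ᶜ.ncard = 2 * Aᶜ.ncard + (n - 1) / 2 := by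
  rw [compl_doubleAdd A c n hA hnc hodd]
  have hf1 : ((fun h => 2 * h) '' Aᶜ).Finite := hfin.image _
  have hf2 : ((fun h => n + 2 * h) '' Aᶜ).Finite := hfin.image _
  have hf3 : {x : ℕ | Odd x ∧ x < n}.Finite :=
    (Set.finite_Iio n).subset (fun x hx => hx.2)
  obtain ⟨j, hj⟩ := hodd
  have hd1 : Disjoint ((fun h => 2 * h) '' Aᶜ)
      ((fun h => n + 2 * h) '' Aᶜ ∪ {x : ℕ | Odd x ∧ x < n}) := by
    rw [Set.disjoint_left]
    rintro x ⟨t, -, ht⟩ hx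
    have ht' : 2 * t = x := ht
    rcases hx with ⟨s, -, hs⟩ | ⟨hx1, -⟩
    · have hs' : n + 2 * s = x := hs
      omega
    · rw [Nat.odd_iff] at hx1
      omega
  have hd2 : Disjoint ((fun h => n + 2 * h) '' Aᶜ) {x : ℕ | Odd x ∧ x < n} := by
    rw [Set.disjoint_left]
    rintro x ⟨t, -, ht⟩ ⟨-, hlt⟩
    have ht' : n + 2 * t = x := ht
    omega
  rw [Set.ncard_union_eq hd1 hf1 (hf2.union hf3), Set.ncard_union_eq hd2 hf2 hf3]
  have e1 : ((fun h => 2 * h) '' Aᶜ).ncard = Aᶜ.ncard :=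
    Set.ncard_image_of_injective _ (fun a b h => by omega)
  have e2 : ((fun h => n + 2 * h) '' Aᶜ).ncard = Aᶜ.ncard :=
    Set.ncard_image_of_injective _ (fun a b h => by omega)
  have e3 : {x : ℕ | Odd x ∧ x < n}.ncard = (n - 1) / 2 := by
    have hset : {x : ℕ | Odd x ∧ x < n} = (fun k => 2 * k + 1) '' Set.Iio ((n - 1) / 2) := by
      ext x
      simp only [Set.mem_setOf_eq, Set.mem_image, Set.mem_Iio, Nat.odd_iff]
      constructor
      · rintro ⟨h1, h2⟩
        exact ⟨x / 2, by omega, show 2 * (x / 2) + 1 = x by omega⟩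
      · rintro ⟨k, hk, hkx⟩
        have : 2 * k + 1 = x := hkx
        omega
    rw [hset, Set.ncard_image_of_injective _
        (fun a b h => by have h' : 2 * a + 1 = 2 * b + 1 := h; omega : Function.Injective fun k => 2 * k + 1),
      ← Finset.coe_Iio, Set.ncard_coe_finset, Nat.card_Iio]
  rw [e1, e2, e3]; ring
theorem stmt5 (H Ht : NumSemigroup) (m c n : ℕ)
    (hm : H.IsMult m) (hc : H.IsConductor c)
    (hd : d2 Ht.carrier = H.carrier) (hn : Ht.IsLeastOdd n)
    (h1 : c + m - 1 ≤ n) (h2 : n ≠ 2 * m - 1) :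
    Ht.genus = 2 * H.genus + (n - 1) / 2 ↔
      Ht.carrier = doubleAdd H.carrier n := by
  obtain ⟨⟨hmH, hmpos⟩, -⟩ := hm
  obtain ⟨hc1, -⟩ := hc
  obtain ⟨⟨hnH, hodd⟩, -⟩ := hn
  have hnc : c ≤ n := by omega
  have hsub : doubleAdd H.carrier n ⊆ Ht.carrier := by
    rintro x ⟨h, hh, i, rfl⟩
    rw [← hd] at hh
    have hh2 : 2 * h ∈ Ht.carrier := hh
    induction i with
    | zero => simpa using hh2
    | succ k ih =>
        have := Ht.add_mem _ ih _ hnH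
        rw [show 2 * h + n * (k + 1) = 2 * h + n * k + n by ring]
        exact this
  have hT : (doubleAdd H.carrier n)ᶜ.ncard = 2 * H.genus + (n - 1) / 2 :=
    ncard_compl_doubleAdd H.carrier c n hc1 hnc hodd H.cofinite
  have hTfin : (doubleAdd H.carrier n)ᶜ.Finite := by
    rw [compl_doubleAdd H.carrier c n hc1 hnc hodd]
    exact ((H.cofinite.image _).union ((H.cofinite.image _).union
      ((Set.finite_Iio n).subset (fun x hx => hx.2))))
  constructor
  · intro hg
    have hcsub : Ht.carrierᶜ ⊆ (doubleAdd H.carrier n)ᶜ := Set.compl_subset_compl.mpr hsub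
    have hEq : Ht.carrierᶜ = (doubleAdd H.carrier n)ᶜ := by
      apply Set.eq_of_subset_of_ncard_le hcsub _ hTfin
      rw [hT]
      rw [NumSemigroup.genus] at hg
      omega
    have := congrArg (·ᶜ) hEq
    simpa using this
  · intro he
    rw [NumSemigroup.genus, he, hT]
end

section
/- Let H be an m-semigroup and H̃ a numerical semigroup with d₂(H̃) = H and n = n(H̃) ≥ c(H) + m − 1, n ≠ 2m − 1. Then g(H̃) = g(H) + (n−1)/2 if and only if H̃ is the semigroup generated by 2H together with n, n+2, n+4, …, n+2(m−1). -/
theorem stmt6 (H Ht : NumSemigroup) (m c n : ℕ)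
    (hm : H.IsMult m) (hc : H.IsConductor c)
    (hd : d2 Ht.carrier = H.carrier) (hn : Ht.IsLeastOdd n)
    (h1 : c + m - 1 ≤ n) (h2 : n ≠ 2 * m - 1) :
    Ht.genus = H.genus + (n - 1) / 2 ↔
      Ht.carrier = {x | ∃ h ∈ H.carrier, ∃ f : ℕ → ℕ,
        x = 2 * h + ∑ i ∈ Finset.range m, f i * (n + 2 * i)} := by
  have hdk : ∀ k, 2 * k ∈ Ht.carrier ↔ k ∈ H.carrier := by
    intro k; rw [← hd]; rfl
  have hnodd : Odd n := hn.1.2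
  have hnmem : n ∈ Ht.carrier := hn.1.1
  have hnlb : ∀ x ∈ Ht.carrier, Odd x → n ≤ x := fun x hx ho => hn.2 ⟨hx, ho⟩
  have hm0 : 0 < m := hm.1.2
  have hmH : m ∈ H.carrier := hm.1.1
  have hcub : ∀ x, c ≤ x → x ∈ H.carrier := hc.1
  have hnc : c ≤ n := le_trans (by omega) h1
  have hmul : ∀ k, m * k ∈ H.carrier := by
    intro k
    induction k with
    | zero => simpa using H.zero_mem
    | succ j ih =>
      have := H.add_mem _ ih _ hmH
      simpa [Nat.mul_succ] using this
  -- key property P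
  set P : Prop := ∀ x, Odd x → n ≤ x → x ∈ Ht.carrier with hP
  -- membership description of the RHS set
  have memS : ∀ x : ℕ,
      (∃ h ∈ H.carrier, ∃ f : ℕ → ℕ,
        x = 2 * h + ∑ i ∈ Finset.range m, f i * (n + 2 * i)) ↔
      ((∃ k ∈ H.carrier, x = 2 * k) ∨ (Odd x ∧ n ≤ x)) := by
    intro x
    constructor
    · rintro ⟨h, hh, f, rfl⟩
      set F := ∑ i ∈ Finset.range m, f i with hF
      set T := ∑ i ∈ Finset.range m, f i * i with hT
      have key : ∑ i ∈ Finset.range m, f i * (n + 2 * i) = n * F + 2 * T := by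
        rw [hF, hT, Finset.mul_sum, Finset.mul_sum, ← Finset.sum_add_distrib]
        exact Finset.sum_congr rfl fun i _ => by ring
      rcases Nat.even_or_odd F with ⟨F', hF'⟩ | hFodd
      · rcases Nat.eq_zero_or_pos F' with rfl | hF'pos
        · have hF0 : F = 0 := by omega
          have hz : ∀ i ∈ Finset.range m, f i = 0 := by
            rwa [hF, Finset.sum_eq_zero_iff] at hF0
          left
          refine ⟨h, hh, ?_⟩
          rw [Finset.sum_eq_zero fun i hi => by rw [hz i hi]; ring]
          omega
        · left
          have hk : h + n * F' + T ∈ H.carrier := by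
            apply hcub
            have : n ≤ n * F' := Nat.le_mul_of_pos_right n hF'pos
            omega
          refine ⟨h + n * F' + T, hk, ?_⟩
          have h2F : n * F = 2 * (n * F') := by rw [hF']; ring
          rw [key]; omega
      · right
        have hnF : Odd (n * F) := hnodd.mul hFodd
        obtain ⟨q, hq⟩ := hnF
        have hF1 : 1 ≤ F := by rcases hFodd with ⟨b, hb⟩; omega
        have hle : n ≤ n * F := Nat.le_mul_of_pos_right n hF1
        constructor
        · exact ⟨h + q + T, by rw [key]; omega⟩
        · rw [key]; omega
    · rintro (⟨k, hk, rfl⟩ | ⟨hxo, hxn⟩)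
      · exact ⟨k, hk, fun _ => 0, by simp⟩
      · obtain ⟨a, ha⟩ := hxo
        obtain ⟨b, hb⟩ := hnodd
        obtain ⟨t, ht⟩ : ∃ t, x = n + 2 * t := ⟨a - b, by omega⟩
        have him : t % m < m := Nat.mod_lt _ hm0
        have hti : t - t % m ∈ H.carrier := by
          have := Nat.div_add_mod t m
          have : t - t % m = m * (t / m) := by omega
          rw [this]; exact hmul _
        refine ⟨t - t % m, hti, fun j => if j = t % m then 1 else 0, ?_⟩
        have hsum : ∑ i ∈ Finset.range m, (if i = t % m then 1 else 0) * (n + 2 * i)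
            = n + 2 * (t % m) := by
          simp [ite_mul, him]
        rw [hsum]
        have := Nat.mod_le t m
        omega
  -- right side iff P
  have rightiff : (Ht.carrier = {x | ∃ h ∈ H.carrier, ∃ f : ℕ → ℕ,
        x = 2 * h + ∑ i ∈ Finset.range m, f i * (n + 2 * i)}) ↔ P := by
    constructor
    · intro hEq x hox hnx
      rw [hEq]
      exact (memS x).2 (Or.inr ⟨hox, hnx⟩)
    · intro hPP
      ext x
      simp only [Set.mem_setOf_eq]
      rw [memS x]
      constructor
      · intro hx
        rcases Nat.even_or_odd x with ⟨k, hk⟩ | hodd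
        · have hx2 : x = 2 * k := by omega
          rw [hx2] at hx
          left; exact ⟨k, (hdk k).1 hx, hx2⟩
        · right; exact ⟨hodd, hnlb x hx hodd⟩
      · rintro (⟨k, hk, rfl⟩ | ⟨ho, hle⟩)
        · exact (hdk k).2 hk
        · exact hPP x ho hle
  -- genus iff P
  have genusiff : (Ht.genus = H.genus + (n - 1) / 2) ↔ P := by
    set E : Set ℕ := (fun k => 2 * k) '' H.carrierᶜ with hE
    set O : Set ℕ := {x | x ∉ Ht.carrier ∧ Odd x} with hO
    have hsplit : Ht.carrierᶜ = E ∪ O := by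
      ext x
      simp only [Set.mem_compl_iff, Set.mem_union, hE, hO, Set.mem_image,
        Set.mem_setOf_eq]
      constructor
      · intro hx
        rcases Nat.even_or_odd x with ⟨k, hk⟩ | hodd
        · have hx2 : x = 2 * k := by omega
          left
          refine ⟨k, fun hkH => hx ?_, by omega⟩
          rw [hx2]; exact (hdk k).2 hkH
        · right; exact ⟨hx, hodd⟩
      · rintro (⟨k, hk, hkx⟩ | ⟨hx, _⟩)
        · intro hmem
          rw [← hkx] at hmem
          exact hk ((hdk k).1 hmem)
        · exact hx
    have hOsub : O ⊆ Ht.carrierᶜ := by rw [hsplit]; exact Set.subset_union_right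
    have hEsub : E ⊆ Ht.carrierᶜ := by rw [hsplit]; exact Set.subset_union_left
    have hEfin : E.Finite := Ht.cofinite.subset hEsub
    have hOfin : O.Finite := Ht.cofinite.subset hOsub
    have hdisj : Disjoint E O := by
      rw [Set.disjoint_left]
      rintro x ⟨k, _, hkx⟩ ⟨_, hodd⟩
      dsimp only at hkx
      obtain ⟨j, hj⟩ := hodd
      omega
    have hEcard : E.ncard = H.genus := by
      rw [hE, Set.ncard_image_of_injective _ (fun a b h => by omega)]
      rfl
    have hgen : Ht.genus = H.genus + O.ncard := by
      rw [NumSemigroup.genus, hsplit, Set.ncard_union_eq hdisj hEfin hOfin, hEcard]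
    obtain ⟨a, hna⟩ := hnodd
    have hhalf : (n - 1) / 2 = a := by omega
    set O₀ : Set ℕ := {x | ∃ j < a, x = 2 * j + 1} with hO₀
    have hO₀card : O₀.ncard = a := by
      have himg : O₀ = (fun j => 2 * j + 1) '' Set.Iio a := by
        ext x
        simp only [hO₀, Set.mem_setOf_eq, Set.mem_image, Set.mem_Iio]
        constructor
        · rintro ⟨j, hj, rfl⟩; exact ⟨j, hj, rfl⟩
        · rintro ⟨j, hj, rfl⟩; exact ⟨j, hj, rfl⟩
      rw [himg, Set.ncard_image_of_injective _ (fun x y h => by omega),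
        ← Finset.coe_range, Set.ncard_coe_finset, Finset.card_range]
    have hO₀sub : O₀ ⊆ O := by
      rintro x ⟨j, hj, rfl⟩
      refine ⟨fun hmem => ?_, ⟨j, by omega⟩⟩
      have := hnlb _ hmem ⟨j, by omega⟩
      omega
    rw [hgen, hhalf]
    constructor
    · intro heq
      have hcard : O.ncard = a := by omega
      have hOeq : O₀ = O :=
        Set.eq_of_subset_of_ncard_le hO₀sub (by omega) hOfin
      intro x hox hnx
      by_contra hxnot
      have hxO : x ∈ O := ⟨hxnot, hox⟩
      rw [← hOeq] at hxO
      obtain ⟨j, hj, hjx⟩ := hxO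
      omega
    · intro hPP
      have hOeq : O = O₀ := by
        apply Set.Subset.antisymm _ hO₀sub
        rintro x ⟨hxnot, hxodd⟩
        have hxlt : x < n := by
          by_contra hge
          exact hxnot (hPP x hxodd (by omega))
        obtain ⟨j, hj⟩ := hxodd
        exact ⟨j, by omega, by omega⟩
      rw [hOeq, hO₀card]
  exact genusiff.trans rightiff.symm
end

section
/- Let H be an m-semigroup with standard basis {m, s₁, …, s_{m−1}} and s_max = max{s₁, …, s_{m−1}}, and let n be an odd integer with n ≥ c(H) + m − 1 and n ≥ 2·g(H) + 3. Then the numerical semigroup H̃ = 2H + nℕ₀ + (n + 2(s_max − m))ℕ₀ has genus 2·g(H) + (n−1)/2 − 1. -/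
/-!
Since `s_max` is the largest element of the Apéry set of `m`, `d = s_max - m` is the Frobenius
number of `H`, and `d < c ≤ n`. As `n` and `n + 2d` are odd while `n`, `n + d` and `n + 2d` lie
in `H`, the semigroup `2H + nℕ₀ + (n + 2d)ℕ₀` is `2H ∪ (n + 2H) ∪ (n + 2d + 2H)`. Its gaps are
the `g` numbers `2y` with `y ∉ H`, the `(n - 1)/2` odd numbers below `n`, and the numbers `n + 2y`
with `y ∉ H`, `y ≠ d`: a gap `y = d + h` with `0 < h ∈ H` would exceed the Frobenius number.
-/

namespace NumSemigroup

variable (H : NumSemigroup)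

def IsFrobenius (d : ℕ) : Prop :=
  d ∉ H.carrier ∧ ∀ y, d < y → y ∈ H.carrier

variable {H}

theorem mul_mem {a : ℕ} (ha : a ∈ H.carrier) (k : ℕ) : a * k ∈ H.carrier := by
  induction k with
  | zero => exact H.zero_mem
  | succ k ih => exact H.add_mem _ ih _ ha

theorem one_le_genus {d : ℕ} (hd : H.IsFrobenius d) : 1 ≤ H.genus :=
  (Set.ncard_pos H.cofinite).mpr ⟨d, hd.1⟩

section Apery

variable {m : ℕ} {s : ℕ → ℕ}

theorem mem_of_apery_le (hm : H.IsMult m)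
    (hs : ∀ i, 0 < i → i < m → IsLeast {h | h ∈ H.carrier ∧ h % m = i} (s i))
    {y : ℕ} (hy : 0 < y % m → s (y % m) ≤ y) : y ∈ H.carrier := by
  rcases Nat.eq_zero_or_pos (y % m) with h0 | hpos
  · rw [← Nat.div_add_mod y m, h0, add_zero]
    exact mul_mem hm.1.1 _
  · obtain ⟨⟨hsH, hsmod⟩, -⟩ := hs (y % m) hpos (Nat.mod_lt y hm.1.2)
    obtain ⟨t, ht⟩ := (Nat.modEq_iff_exists_eq_add (hy hpos)).mp hsmod
    exact ht ▸ H.add_mem _ hsH _ (mul_mem hm.1.1 t)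

theorem isFrobenius_sub_mult (hm : H.IsMult m)
    (hs : ∀ i, 0 < i → i < m → IsLeast {h | h ∈ H.carrier ∧ h % m = i} (s i)) {smax : ℕ}
    (hsmax : IsGreatest {x | ∃ i, 0 < i ∧ i < m ∧ x = s i} smax) :
    H.IsFrobenius (smax - m) := by
  obtain ⟨⟨k, hk0, hkm, rfl⟩, hub⟩ := hsmax
  obtain ⟨⟨hskH, hskmod⟩, hsk_least⟩ := hs k hk0 hkm
  have hm0 : 0 < m := hm.1.2
  have hmsk : m ≤ s k :=
    hm.2 ⟨hskH, Nat.pos_of_ne_zero fun h => by simp [h] at hskmod; omega⟩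
  refine ⟨fun hd => ?_, fun y hy => mem_of_apery_le hm hs fun hpos => ?_⟩
  · have hdmod : (s k - m) % m = k := by
      rw [← Nat.add_mod_right, Nat.sub_add_cancel hmsk, hskmod]
    have := hsk_least ⟨hd, hdmod⟩
    omega
  · have hsi := hs (y % m) hpos (Nat.mod_lt y hm0)
    have hle : s (y % m) ≤ s k := hub ⟨y % m, hpos, Nat.mod_lt y hm0, rfl⟩
    exact Nat.ModEq.le_of_lt_add hsi.1.2 (by omega)

end Apery

theorem mem_doubleAdd2_iff {a b : ℕ} (ha : Odd a) (hb : Odd b) (haH : a ∈ H.carrier)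
    (hbH : b ∈ H.carrier) (habH : (a + b) / 2 ∈ H.carrier) {x : ℕ} :
    x ∈ doubleAdd2 H.carrier a b ↔
      ∃ h ∈ H.carrier, x = 2 * h ∨ x = a + 2 * h ∨ x = b + 2 * h := by
  constructor
  · rintro ⟨h, hh, i, j, rfl⟩
    obtain ⟨p, rfl⟩ := ha
    obtain ⟨q, rfl⟩ := hb
    rw [show (2 * p + 1 + (2 * q + 1)) / 2 = p + q + 1 by omega] at habH
    have hmem (i j : ℕ) : h + (2 * p + 1) * i + (2 * q + 1) * j ∈ H.carrier :=
      H.add_mem _ (H.add_mem _ hh _ (mul_mem haH i)) _ (mul_mem hbH j)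
    obtain ⟨i, rfl | rfl⟩ := Nat.even_or_odd' i <;> obtain ⟨j, rfl | rfl⟩ := Nat.even_or_odd' j
    · exact ⟨_, hmem i j, Or.inl (by ring)⟩
    · exact ⟨_, hmem i j, Or.inr (Or.inr (by ring))⟩
    · exact ⟨_, hmem i j, Or.inr (Or.inl (by ring))⟩
    · exact ⟨_, H.add_mem _ (hmem i j) _ habH, Or.inl (by ring)⟩
  · rintro ⟨h, hh, rfl | rfl | rfl⟩
    · exact ⟨h, hh, 0, 0, by ring⟩
    · exact ⟨h, hh, 1, 0, by ring⟩
    · exact ⟨h, hh, 0, 1, by ring⟩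

section Frobenius

variable {a d : ℕ}

theorem mem_doubleAdd2_frobenius_iff (ha : Odd a) (hF : H.IsFrobenius d) (hda : d < a)
    {x : ℕ} : x ∈ doubleAdd2 H.carrier a (a + 2 * d) ↔
      ∃ h ∈ H.carrier, x = 2 * h ∨ x = a + 2 * h ∨ x = a + 2 * d + 2 * h :=
  mem_doubleAdd2_iff ha (ha.add_even (even_two_mul d)) (hF.2 a hda) (hF.2 _ (by omega))
    (hF.2 _ (by omega))

theorem two_mul_mem_doubleAdd2_iff (ha : Odd a) (hF : H.IsFrobenius d) (hda : d < a)
    {y : ℕ} : 2 * y ∈ doubleAdd2 H.carrier a (a + 2 * d) ↔ y ∈ H.carrier := by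
  obtain ⟨p, rfl⟩ := id ha
  rw [mem_doubleAdd2_frobenius_iff ha hF hda]
  refine ⟨?_, fun hy => ⟨y, hy, Or.inl rfl⟩⟩
  rintro ⟨h, hh, hyh | hyh | hyh⟩
  · exact (show y = h by omega) ▸ hh
  all_goals omega

theorem two_mul_add_one_notMem_doubleAdd2 (ha : Odd a) (hF : H.IsFrobenius d) (hda : d < a)
    {t : ℕ} (ht : 2 * t + 1 < a) : 2 * t + 1 ∉ doubleAdd2 H.carrier a (a + 2 * d) := by
  rw [mem_doubleAdd2_frobenius_iff ha hF hda]
  omega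

theorem add_two_mul_mem_doubleAdd2_iff (ha : Odd a) (hF : H.IsFrobenius d) (hda : d < a)
    {y : ℕ} : a + 2 * y ∈ doubleAdd2 H.carrier a (a + 2 * d) ↔ y ∈ H.carrier ∨ y = d := by
  obtain ⟨p, rfl⟩ := id ha
  rw [mem_doubleAdd2_frobenius_iff ha hF hda]
  constructor
  · rintro ⟨h, hh, hyh | hyh | hyh⟩
    · omega
    · exact Or.inl ((show y = h by omega) ▸ hh)
    · rcases Nat.eq_zero_or_pos h with rfl | hpos
      · exact Or.inr (by omega)
      · exact Or.inl (hF.2 y (by omega))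
  · rintro (hy | rfl)
    · exact ⟨y, hy, Or.inr (Or.inl rfl)⟩
    · exact ⟨0, H.zero_mem, Or.inr (Or.inr (by ring))⟩

theorem compl_doubleAdd2_eq (ha : Odd a) (hF : H.IsFrobenius d) (hda : d < a) :
    (doubleAdd2 H.carrier a (a + 2 * d))ᶜ =
      (2 * ·) '' H.carrierᶜ ∪ (2 * · + 1) '' Set.Iio ((a - 1) / 2) ∪
        (a + 2 * ·) '' (H.carrierᶜ \ {d}) := by
  obtain ⟨p, rfl⟩ := id ha
  ext x
  simp only [Set.mem_compl_iff, Set.mem_union, Set.mem_image, Set.mem_Iio, Set.mem_sdiff,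
    Set.mem_singleton_iff]
  obtain ⟨y, rfl | rfl⟩ := Nat.even_or_odd' x
  · rw [two_mul_mem_doubleAdd2_iff ha hF hda]
    refine ⟨fun hy => Or.inl (Or.inl ⟨y, hy, rfl⟩), ?_⟩
    rintro ((⟨z, hz, hzy⟩ | ⟨t, -, ht⟩) | ⟨z, -, hz⟩)
    · exact (show z = y by omega) ▸ hz
    all_goals omega
  by_cases hya : 2 * y + 1 < 2 * p + 1
  · exact iff_of_true (two_mul_add_one_notMem_doubleAdd2 ha hF hda hya)
      (Or.inl (Or.inr ⟨y, by omega, rfl⟩))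
  obtain ⟨z, hz⟩ : ∃ z, 2 * y + 1 = 2 * p + 1 + 2 * z := ⟨y - p, by omega⟩
  rw [hz, add_two_mul_mem_doubleAdd2_iff ha hF hda, not_or]
  refine ⟨fun hzd => Or.inr ⟨z, hzd, rfl⟩, ?_⟩
  rintro ((⟨w, -, hw⟩ | ⟨t, ht, htz⟩) | ⟨w, hwd, hw⟩)
  · omega
  · omega
  · exact (show w = z by omega) ▸ hwd

theorem ncard_compl_doubleAdd2 (ha : Odd a) (hF : H.IsFrobenius d) (hda : d < a) :
    (doubleAdd2 H.carrier a (a + 2 * d))ᶜ.ncard = 2 * H.genus + (a - 1) / 2 - 1 := by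
  have hfin : H.carrierᶜ.Finite := H.cofinite
  have hdisj₁ : Disjoint ((2 * ·) '' H.carrierᶜ) ((2 * · + 1) '' Set.Iio ((a - 1) / 2)) := by
    rw [Set.disjoint_left]
    rintro _ ⟨y, -, rfl⟩ ⟨t, -, ht⟩
    beta_reduce at ht
    omega
  have hdisj₂ : Disjoint ((2 * ·) '' H.carrierᶜ ∪ (2 * · + 1) '' Set.Iio ((a - 1) / 2))
      ((a + 2 * ·) '' (H.carrierᶜ \ {d})) := by
    obtain ⟨p, rfl⟩ := ha
    rw [Set.disjoint_left]
    rintro _ (⟨y, -, rfl⟩ | ⟨t, ht, rfl⟩) ⟨z, -, hz⟩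
    · beta_reduce at hz
      omega
    · rw [Set.mem_Iio] at ht
      beta_reduce at hz
      omega
  rw [compl_doubleAdd2_eq ha hF hda,
    Set.ncard_union_eq hdisj₂ ((hfin.image _).union ((Set.finite_Iio _).image _))
      (hfin.sdiff.image _),
    Set.ncard_union_eq hdisj₁ (hfin.image _) ((Set.finite_Iio _).image _),
    Set.ncard_image_of_injective _ (fun _ _ h => by simpa using h),
    Set.ncard_image_of_injective _ (fun _ _ h => by simpa using h),
    Set.ncard_image_of_injective _ (fun _ _ h => by simpa using h),
    Set.ncard_sdiff_singleton_of_mem hF.1, Set.ncard_Iio_nat]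
  have hg := one_le_genus hF
  unfold genus at hg ⊢
  omega

end Frobenius

end NumSemigroup

theorem stmt7_general (H : NumSemigroup) (m c n smax : ℕ) (s : ℕ → ℕ)
    (hm : H.IsMult m) (hc : H.IsConductor c)
    (hs : ∀ i, 0 < i → i < m → IsLeast {h | h ∈ H.carrier ∧ h % m = i} (s i))
    (hsmax : IsGreatest {x | ∃ i, 0 < i ∧ i < m ∧ x = s i} smax)
    (hodd : Odd n) (h1 : c + m - 1 ≤ n) :
    (doubleAdd2 H.carrier n (n + 2 * (smax - m)))ᶜ.ncard =
      2 * H.genus + (n - 1) / 2 - 1 := by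
  have hF := NumSemigroup.isFrobenius_sub_mult hm hs hsmax
  have hdc : smax - m < c := lt_of_not_ge fun hcd => hF.1 (hc.1 _ hcd)
  have hm0 : 0 < m := hm.1.2
  exact NumSemigroup.ncard_compl_doubleAdd2 hodd hF (by omega)

theorem stmt7 (H : NumSemigroup) (m c n smax : ℕ) (s : ℕ → ℕ)
    (hm : H.IsMult m) (hc : H.IsConductor c)
    (hs : ∀ i, 0 < i → i < m → IsLeast {h | h ∈ H.carrier ∧ h % m = i} (s i))
    (hsmax : IsGreatest {x | ∃ i, 0 < i ∧ i < m ∧ x = s i} smax)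
    (hodd : Odd n) (h1 : c + m - 1 ≤ n) (h2 : 2 * H.genus + 3 ≤ n) :
    (doubleAdd2 H.carrier n (n + 2 * (smax - m)))ᶜ.ncard =
      2 * H.genus + (n - 1) / 2 - 1 :=
  stmt7_general H m c n smax s hm hc hs hsmax hodd h1
end

section
/- Let H be a symmetric m-semigroup with m ≥ 3, with standard basis {m, s₁, …, s_{m−1}} and s_max = max{s₁,…,s_{m−1}}, and let n be an odd integer with n ≥ 2·g(H) + m − 1. Then the numerical semigroup H̃ = 2H + nℕ₀ + (n + 2(s_max − 2m))ℕ₀ has genus 2·g(H) + (n−1)/2 − 2. -/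
theorem stmt8 (H : NumSemigroup) (m n smax : ℕ) (s : ℕ → ℕ)
    (hm : H.IsMult m) (hm3 : 3 ≤ m)
    (hsym : SymSgp H.carrier H.genus)
    (hs : ∀ i, 0 < i → i < m → IsLeast {h | h ∈ H.carrier ∧ h % m = i} (s i))
    (hsmax : IsGreatest {x | ∃ i, 0 < i ∧ i < m ∧ x = s i} smax)
    (hodd : Odd n) (h1 : 2 * H.genus + m - 1 ≤ n) :
    (doubleAdd2 H.carrier n (n + 2 * (smax - 2 * m)))ᶜ.ncard =
      2 * H.genus + (n - 1) / 2 - 2 := by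
  classical
  set g := H.genus with hgdef
  have hgval : H.carrierᶜ.ncard = g := rfl
  have h0 : (0:ℕ) ∈ H.carrier := H.zero_mem
  have hmH : m ∈ H.carrier := hm.1.1
  have hmpos : 0 < m := hm.1.2
  have hmle : ∀ x, x ∈ H.carrier → 0 < x → m ≤ x := fun x hx hpos => hm.2 ⟨hx, hpos⟩
  have hn2 : n % 2 = 1 := Nat.odd_iff.mp hodd
  -- conductor : everything ≥ 2g is in H
  have hcond : ∀ x : ℕ, 2 * g ≤ x → x ∈ H.carrier := by
    intro x hx
    have hpre : ¬ ∃ a ∈ H.carrier, (a : ℤ) = 2 * (g:ℤ) - 1 - (x:ℤ) := by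
      rintro ⟨a, _, ha⟩
      omega
    obtain ⟨a, haH, ha⟩ := (hsym (x : ℤ)).2 hpre
    have : a = x := by exact_mod_cast ha
    rwa [this] at haH
  have hgap_lt : ∀ t : ℕ, t ∉ H.carrier → t < 2 * g := by
    intro t ht
    by_contra h
    exact ht (hcond t (by omega))
  -- g ≥ m - 1
  have hgm : m - 1 ≤ g := by
    have hsub : Set.Ico 1 m ⊆ H.carrierᶜ := by
      intro x hx
      simp only [Set.mem_Ico] at hx
      intro hxH
      have := hmle x hxH (by omega)
      omega
    have hle := Set.ncard_le_ncard hsub H.cofinite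
    have hIco : (Set.Ico 1 m).ncard = m - 1 := by
      rw [← Finset.coe_Ico, Set.ncard_coe_finset, Nat.card_Ico]
    omega
  have hg2 : 2 ≤ g := by omega
  have hqle : m + 1 ≤ 2 * g := by omega
  -- symmetry in ℕ
  have hsymN : ∀ t : ℕ, t < 2 * g → (t ∈ H.carrier ↔ (2 * g - 1 - t) ∉ H.carrier) := by
    intro t ht
    have h := hsym (t : ℤ)
    have e : 2 * (g:ℤ) - 1 - (t:ℤ) = ((2 * g - 1 - t : ℕ) : ℤ) := by omega
    rw [e] at h
    simpa using h
  have hF : 2 * g - 1 ∉ H.carrier := by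
    intro h
    have h2 := (hsymN (2*g-1) (by omega)).1 h
    have e : 2*g - 1 - (2*g - 1) = 0 := by omega
    rw [e] at h2
    exact h2 h0
  -- multiples of m
  have hmul : ∀ k : ℕ, k * m ∈ H.carrier := by
    intro k
    induction k with
    | zero => simpa using h0
    | succ k ih =>
      have := H.add_mem _ ih m hmH
      simpa [Nat.succ_mul] using this
  have hmodmem : ∀ a b : ℕ, a ∈ H.carrier → a ≤ b → a % m = b % m → b ∈ H.carrier := by
    intro a b haH hab hmod
    have hdvd : m ∣ (b - a) := (Nat.modEq_iff_dvd' hab).1 hmod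
    obtain ⟨k, hk⟩ := hdvd
    have hmk : m * k ∈ H.carrier := by rw [mul_comm]; exact hmul k
    have : b = a + m * k := by omega
    rw [this]
    exact H.add_mem a haH _ hmk
  -- s i ≤ 2g - 1 + m for all i
  have hsile : ∀ i, 0 < i → i < m → s i ≤ 2 * g - 1 + m := by
    intro i hi0 him
    by_contra hgt
    push_neg at hgt
    have hsi := hs i hi0 him
    have hmem : s i - m ∈ H.carrier := hcond _ (by omega)
    have hmod : (s i - m) % m = i := by
      have h2 : (s i - m) + m = s i := by omega
      calc (s i - m) % m = ((s i - m) + m) % m := (Nat.add_mod_right _ _).symm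
        _ = s i % m := by rw [h2]
        _ = i := hsi.1.2
    have := hsi.2 ⟨hmem, hmod⟩
    omega
  have hi0pos : 0 < (2 * g - 1) % m := by
    rcases Nat.eq_zero_or_pos ((2*g-1) % m) with h | h
    · exfalso
      obtain ⟨k, hk⟩ := Nat.dvd_of_mod_eq_zero h
      have hmk : m * k ∈ H.carrier := by rw [mul_comm]; exact hmul k
      exact hF (by rw [hk]; exact hmk)
    · exact h
  -- smax = 2g - 1 + m
  have hsmax_eq : smax = 2 * g - 1 + m := by
    obtain ⟨i1, hi1a, hi1b, hi1c⟩ := hsmax.1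
    have hle : smax ≤ 2*g-1+m := by rw [hi1c]; exact hsile i1 hi1a hi1b
    have hi0m : (2*g-1) % m < m := Nat.mod_lt _ hmpos
    have hsi0 := hs ((2*g-1) % m) hi0pos hi0m
    have hmodF : (2*g-1+m) % m = (2*g-1) % m := Nat.add_mod_right _ _
    have h2 : 2*g-1+m ≤ s ((2*g-1) % m) := by
      by_contra hlt
      push_neg at hlt
      obtain ⟨hsH, hsm⟩ := hsi0.1
      rcases le_or_gt (s ((2*g-1) % m)) (2*g-1) with hc | hc
      · exact hF (hmodmem _ _ hsH hc (by rw [hsm]))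
      · have hmq : (2*g-1) % m = s ((2*g-1) % m) % m := by rw [hsm]
        have hdvd : m ∣ (s ((2*g-1) % m) - (2*g-1)) := (Nat.modEq_iff_dvd' hc.le).1 hmq
        have hpos : 0 < s ((2*g-1) % m) - (2*g-1) := by omega
        have := Nat.le_of_dvd hpos hdvd
        omega
    have h3 : s ((2*g-1) % m) ≤ smax := hsmax.2 ⟨(2*g-1) % m, hi0pos, hi0m, rfl⟩
    omega
  set q : ℕ := 2 * g - 1 - m with hqdef
  have hbval : n + 2 * (smax - 2 * m) = n + 2 * q := by omega
  -- membership characterization of the doubled semigroup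
  have hmemA : ∀ x : ℕ, x ∈ doubleAdd2 H.carrier n (n + 2 * (smax - 2 * m)) ↔
      (∃ a ∈ H.carrier, x = 2 * a) ∨
      (∃ t : ℕ, (t ∈ H.carrier ∨ ∃ a ∈ H.carrier, t = q + a) ∧ x = n + 2 * t) := by
    intro x
    constructor
    · rintro ⟨a, haH, i, j, rfl⟩
      have e0 : (n + 2 * (smax - 2*m)) * j = n*j + 2*(q*j) := by rw [hbval]; ring
      rcases Nat.even_or_odd (i + j) with ⟨k, hk⟩ | ⟨k, hk⟩
      · have e2 : n*i + n*j = 2*(n*k) := by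
          calc n*i + n*j = n*(i+j) := by ring
            _ = n*(k+k) := by rw [hk]
            _ = 2*(n*k) := by ring
        left
        refine ⟨a + n*k + q*j, ?_, by omega⟩
        rcases Nat.eq_zero_or_pos k with rfl | hk1
        · have hj : j = 0 := by omega
          subst hj
          simpa using haH
        · have hnk : n ≤ n * k := by
            calc n = n*1 := by ring
              _ ≤ n*k := Nat.mul_le_mul_left n hk1
          exact hcond _ (by omega)
      · have e2 : n*i + n*j = 2*(n*k) + n := by
          calc n*i + n*j = n*(i+j) := by ring
            _ = n*(2*k+1) := by rw [hk]
            _ = 2*(n*k) + n := by ring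
        right
        refine ⟨a + n*k + q*j, ?_, by omega⟩
        rcases Nat.eq_zero_or_pos j with rfl | hj1
        · left
          rcases Nat.eq_zero_or_pos k with rfl | hk1
          · simpa using haH
          · have hnk : n ≤ n * k := by
              calc n = n*1 := by ring
                _ ≤ n*k := Nat.mul_le_mul_left n hk1
            exact hcond _ (by omega)
        · right
          have hj' : j = (j-1)+1 := by omega
          have e3 : q * j = q*(j-1) + q := by
            calc q * j = q * ((j-1)+1) := by rw [← hj']
              _ = q*(j-1) + q := by ring
          refine ⟨a + n*k + q*(j-1), ?_, by omega⟩
          rcases Nat.eq_zero_or_pos k with rfl | hk1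
          · have hjj : j = 1 := by omega
            subst hjj
            simpa using haH
          · have hnk : n ≤ n * k := by
              calc n = n*1 := by ring
                _ ≤ n*k := Nat.mul_le_mul_left n hk1
            exact hcond _ (by omega)
    · rintro (⟨a, haH, rfl⟩ | ⟨t, ht, rfl⟩)
      · exact ⟨a, haH, 0, 0, by ring⟩
      · rcases ht with htH | ⟨a, haH, rfl⟩
        · exact ⟨t, htH, 1, 0, by ring⟩
        · exact ⟨a, haH, 0, 1, by rw [hbval]; ring⟩
  -- the key claim about odd gaps above n
  have hclaim : ∀ t : ℕ, (t ∉ H.carrier ∧ ¬∃ a ∈ H.carrier, t = q + a) ↔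
      (∃ w, (w ∈ H.carrier ∧ m < w ∧ w < 2*g) ∧ 2*g-1-w = t) := by
    intro t
    constructor
    · rintro ⟨ht, hq⟩
      have htlt : t < 2*g := hgap_lt t ht
      have hw : (2*g-1-t) ∈ H.carrier := by
        by_contra hw
        exact ht ((hsymN t htlt).2 hw)
      refine ⟨2*g-1-t, ⟨hw, ?_, by omega⟩, by omega⟩
      by_contra hle
      push_neg at hle
      rcases Nat.eq_zero_or_pos (2*g-1-t) with hw0 | hwpos
      · exact hq ⟨m, hmH, by omega⟩
      · have := hmle _ hw hwpos
        exact hq ⟨0, h0, by omega⟩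
    · rintro ⟨w, ⟨hwH, hmw, hw2g⟩, rfl⟩
      constructor
      · intro ht
        have h2 := (hsymN (2*g-1-w) (by omega)).1 ht
        have e : 2*g-1-(2*g-1-w) = w := by omega
        rw [e] at h2
        exact h2 hwH
      · rintro ⟨a, haH, he⟩
        omega
  -- decomposition of the complement
  have hcompl : (doubleAdd2 H.carrier n (n + 2 * (smax - 2 * m)))ᶜ =
      ((fun t => 2*t) '' H.carrierᶜ ∪ {x | x % 2 = 1 ∧ x < n}) ∪
      ((fun w => n + 2*(2*g-1-w)) '' {w | w ∈ H.carrier ∧ m < w ∧ w < 2*g}) := by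
    ext x
    simp only [Set.mem_compl_iff, Set.mem_union, Set.mem_image, Set.mem_setOf_eq]
    rw [hmemA x]
    constructor
    · intro hx
      rcases Nat.even_or_odd x with ⟨u, hu⟩ | ⟨u, hu⟩
      · refine Or.inl (Or.inl ⟨u, ?_, by omega⟩)
        intro huH
        exact hx (Or.inl ⟨u, huH, by omega⟩)
      · rcases lt_or_ge x n with hxn | hnx
        · exact Or.inl (Or.inr ⟨by omega, hxn⟩)
        · obtain ⟨t, hts⟩ : ∃ t, x = n + 2*t := ⟨(x-n)/2, by omega⟩
          have hnotP : ¬(t ∈ H.carrier ∨ ∃ a ∈ H.carrier, t = q + a) := by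
            intro hP
            exact hx (Or.inr ⟨t, hP, hts⟩)
          obtain ⟨w, hwprop, hwe⟩ := (hclaim t).1
            ⟨fun h => hnotP (Or.inl h), fun hex => hnotP (Or.inr hex)⟩
          exact Or.inr ⟨w, hwprop, by omega⟩
    · intro hx hP
      rcases hx with (⟨u, huH, hux⟩ | ⟨hxodd, hxn⟩) | ⟨w, ⟨hwH, hmw, hw2g⟩, hwx⟩
      · rcases hP with ⟨a, haH, he⟩ | ⟨t, _, he⟩
        · have : a = u := by omega
          exact huH (this ▸ haH)
        · omega
      · rcases hP with ⟨a, haH, he⟩ | ⟨t, _, he⟩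
        · omega
        · omega
      · have hcl := (hclaim (2*g-1-w)).2 ⟨w, ⟨hwH, hmw, hw2g⟩, rfl⟩
        rcases hP with ⟨a, haH, he⟩ | ⟨t, hP2, he⟩
        · omega
        · have ht : t = 2*g-1-w := by omega
          rw [ht] at hP2
          rcases hP2 with h | h
          · exact hcl.1 h
          · exact hcl.2 h
  -- finiteness
  have hT1fin : ((fun t => 2*t) '' H.carrierᶜ).Finite := H.cofinite.image _
  have hT2fin : ({x : ℕ | x % 2 = 1 ∧ x < n}).Finite :=
    Set.Finite.subset (Set.finite_Iio n) (fun x hx => hx.2)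
  have hS3fin : ({w | w ∈ H.carrier ∧ m < w ∧ w < 2*g}).Finite :=
    Set.Finite.subset (Set.finite_Iio (2*g)) (fun x hx => hx.2.2)
  have hT3fin : ((fun w => n + 2*(2*g-1-w)) '' {w | w ∈ H.carrier ∧ m < w ∧ w < 2*g}).Finite :=
    hS3fin.image _
  -- cardinalities
  have hIio : ∀ k : ℕ, (Set.Iio k).ncard = k := by
    intro k
    rw [← Finset.coe_Iio, Set.ncard_coe_finset, Nat.card_Iio]
  have hT1card : ((fun t => 2*t) '' H.carrierᶜ).ncard = g := by
    rw [Set.ncard_image_of_injective _ (fun a b hab => by have h : 2*a = 2*b := hab; omega : Function.Injective (fun t => 2*t))]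
    exact hgval
  have hT2card : ({x : ℕ | x % 2 = 1 ∧ x < n}).ncard = (n-1)/2 := by
    have hT2 : {x : ℕ | x % 2 = 1 ∧ x < n} = (fun k => 2*k+1) '' Set.Iio ((n-1)/2) := by
      ext x
      simp only [Set.mem_setOf_eq, Set.mem_image, Set.mem_Iio]
      constructor
      · rintro ⟨ha, hb⟩
        exact ⟨x/2, by omega, by omega⟩
      · rintro ⟨k, hk, rfl⟩
        constructor
        · show (2*k+1) % 2 = 1
          omega
        · show 2*k+1 < n
          omega
    rw [hT2, Set.ncard_image_of_injective _ (fun a b hab => by have h : 2*a+1 = 2*b+1 := hab; omega : Function.Injective (fun k => 2*k+1)), hIio]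
  have hHI : ({w | w ∈ H.carrier ∧ w < 2*g} : Set ℕ).ncard = g := by
    have hHIsub : H.carrierᶜ ⊆ Set.Iio (2*g) := fun t ht => hgap_lt t ht
    have hdiff : Set.Iio (2*g) \ H.carrierᶜ = {w | w ∈ H.carrier ∧ w < 2*g} := by
      ext w
      simp only [Set.mem_diff, Set.mem_Iio, Set.mem_compl_iff, not_not, Set.mem_setOf_eq]
      tauto
    rw [← hdiff, Set.ncard_diff hHIsub H.cofinite, hIio, hgval]
    omega
  have hS3card : ({w | w ∈ H.carrier ∧ m < w ∧ w < 2*g} : Set ℕ).ncard = g - 2 := by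
    have hsub0m : ({0, m} : Set ℕ) ⊆ {w | w ∈ H.carrier ∧ w < 2*g} := by
      rintro w hw
      rcases hw with rfl | hw
      · exact ⟨h0, by omega⟩
      · rw [Set.mem_singleton_iff] at hw
        subst hw
        exact ⟨hmH, by omega⟩
    have hS3eq : ({w | w ∈ H.carrier ∧ m < w ∧ w < 2*g} : Set ℕ) =
        {w | w ∈ H.carrier ∧ w < 2*g} \ {0, m} := by
      ext w
      simp only [Set.mem_setOf_eq, Set.mem_diff, Set.mem_insert_iff, Set.mem_singleton_iff]
      constructor
      · rintro ⟨hw, hmw, h2g⟩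
        exact ⟨⟨hw, h2g⟩, by omega⟩
      · rintro ⟨⟨hw, h2g⟩, hne⟩
        push_neg at hne
        have h0w : 0 < w := by omega
        have := hmle w hw h0w
        refine ⟨hw, by omega, h2g⟩
    rw [hS3eq, Set.ncard_diff hsub0m (Set.toFinite _), hHI,
      Set.ncard_pair (show (0:ℕ) ≠ m by omega)]
  have hT3card : ((fun w => n + 2*(2*g-1-w)) '' {w | w ∈ H.carrier ∧ m < w ∧ w < 2*g}).ncard = g - 2 := by
    rw [Set.ncard_image_of_injOn, hS3card]
    intro a ha b hb hab
    simp only [Set.mem_setOf_eq] at ha hb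
    simp only at hab
    omega
  -- disjointness
  have hd12 : Disjoint ((fun t => 2*t) '' H.carrierᶜ) {x : ℕ | x % 2 = 1 ∧ x < n} := by
    rw [Set.disjoint_left]
    rintro x ⟨t, ht, hte⟩ ⟨hx1, hx2⟩
    have hte' : 2*t = x := hte
    omega
  have hd3 : Disjoint ((fun t => 2*t) '' H.carrierᶜ ∪ {x : ℕ | x % 2 = 1 ∧ x < n})
      ((fun w => n + 2*(2*g-1-w)) '' {w | w ∈ H.carrier ∧ m < w ∧ w < 2*g}) := by
    rw [Set.disjoint_left]
    rintro x hx ⟨w, ⟨hwH, hmw, hw2g⟩, hwe⟩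
    have hwe' : n + 2*(2*g-1-w) = x := hwe
    rcases hx with ⟨t, ht, hte⟩ | ⟨hx1, hx2⟩
    · have hte' : 2*t = x := hte
      omega
    · omega
  rw [hcompl, Set.ncard_union_eq hd3 (hT1fin.union hT2fin) hT3fin,
    Set.ncard_union_eq hd12 hT1fin hT2fin, hT1card, hT2card, hT3card]
  omega
end

section
/- The numerical semigroup ⟨7, 8, 12, 18⟩ has genus 11 and d₂(⟨7,8,12,18⟩) = ⟨4,6,7,9⟩. Consequently, any numerical semigroup H̃ with d₂(H̃) = ⟨4,6,7,9⟩ and least odd element at most 7 has genus at most 11. -/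
/-- Explicit description of ⟨7,8,12,18⟩. -/
def Tset : Set ℕ := {x | x = 0 ∨ x = 7 ∨ x = 8 ∨ x = 12 ∨ x = 14 ∨ x = 15 ∨ x = 16 ∨ 18 ≤ x}

/-- Explicit description of ⟨4,6,7,9⟩. -/
def Uset : Set ℕ := {x | x = 0 ∨ x = 4 ∨ x = 6 ∨ x = 7 ∨ 8 ≤ x}

def TM : AddSubmonoid ℕ where
  carrier := Tset
  zero_mem' := Or.inl rfl
  add_mem' := by
    intro a b ha hb
    simp only [Tset, Set.mem_setOf_eq] at *
    omega

def UM : AddSubmonoid ℕ where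
  carrier := Uset
  zero_mem' := Or.inl rfl
  add_mem' := by
    intro a b ha hb
    simp only [Uset, Set.mem_setOf_eq] at *
    omega

lemma ge18 : ∀ x : ℕ, 18 ≤ x → x ∈ AddSubmonoid.closure ({7, 8, 12, 18} : Set ℕ) := by
  intro x
  induction x using Nat.strong_induction_on with
  | _ x ih =>
    intro hx
    have h7 : (7 : ℕ) ∈ AddSubmonoid.closure ({7, 8, 12, 18} : Set ℕ) :=
      AddSubmonoid.subset_closure (by simp)
    have h8 : (8 : ℕ) ∈ AddSubmonoid.closure ({7, 8, 12, 18} : Set ℕ) :=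
      AddSubmonoid.subset_closure (by simp)
    have h12 : (12 : ℕ) ∈ AddSubmonoid.closure ({7, 8, 12, 18} : Set ℕ) :=
      AddSubmonoid.subset_closure (by simp)
    have h18 : (18 : ℕ) ∈ AddSubmonoid.closure ({7, 8, 12, 18} : Set ℕ) :=
      AddSubmonoid.subset_closure (by simp)
    rcases le_or_gt x 24 with h | h
    · interval_cases x
      · exact h18
      · have : (19 : ℕ) = 7 + 12 := by norm_num
        rw [this]; exact add_mem h7 h12
      · have : (20 : ℕ) = 8 + 12 := by norm_num
        rw [this]; exact add_mem h8 h12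
      · have : (21 : ℕ) = 7 + (7 + 7) := by norm_num
        rw [this]; exact add_mem h7 (add_mem h7 h7)
      · have : (22 : ℕ) = 7 + (7 + 8) := by norm_num
        rw [this]; exact add_mem h7 (add_mem h7 h8)
      · have : (23 : ℕ) = 7 + (8 + 8) := by norm_num
        rw [this]; exact add_mem h7 (add_mem h8 h8)
      · have : (24 : ℕ) = 12 + 12 := by norm_num
        rw [this]; exact add_mem h12 h12
    · have hm := ih (x - 7) (by omega) (by omega)
      have := add_mem hm h7
      rwa [Nat.sub_add_cancel (by omega)] at this

lemma ge8 : ∀ x : ℕ, 8 ≤ x → x ∈ AddSubmonoid.closure ({4, 6, 7, 9} : Set ℕ) := by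
  intro x
  induction x using Nat.strong_induction_on with
  | _ x ih =>
    intro hx
    have h4 : (4 : ℕ) ∈ AddSubmonoid.closure ({4, 6, 7, 9} : Set ℕ) :=
      AddSubmonoid.subset_closure (by simp)
    have h6 : (6 : ℕ) ∈ AddSubmonoid.closure ({4, 6, 7, 9} : Set ℕ) :=
      AddSubmonoid.subset_closure (by simp)
    have h7 : (7 : ℕ) ∈ AddSubmonoid.closure ({4, 6, 7, 9} : Set ℕ) :=
      AddSubmonoid.subset_closure (by simp)
    have h9 : (9 : ℕ) ∈ AddSubmonoid.closure ({4, 6, 7, 9} : Set ℕ) :=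
      AddSubmonoid.subset_closure (by simp)
    rcases le_or_gt x 11 with h | h
    · interval_cases x
      · have : (8 : ℕ) = 4 + 4 := by norm_num
        rw [this]; exact add_mem h4 h4
      · exact h9
      · have : (10 : ℕ) = 4 + 6 := by norm_num
        rw [this]; exact add_mem h4 h6
      · have : (11 : ℕ) = 4 + 7 := by norm_num
        rw [this]; exact add_mem h4 h7
    · have hm := ih (x - 4) (by omega) (by omega)
      have := add_mem hm h4
      rwa [Nat.sub_add_cancel (by omega)] at this

lemma genT : genSG {7, 8, 12, 18} = Tset := by
  apply Set.Subset.antisymm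
  · have hle : AddSubmonoid.closure ({7, 8, 12, 18} : Set ℕ) ≤ TM := by
      rw [AddSubmonoid.closure_le]
      intro x hx
      simp only [Set.mem_insert_iff, Set.mem_singleton_iff] at hx
      show x ∈ Tset
      simp only [Tset, Set.mem_setOf_eq]
      omega
    exact fun x hx => hle hx
  · intro x hx
    simp only [Tset, Set.mem_setOf_eq] at hx
    have h7 : (7 : ℕ) ∈ AddSubmonoid.closure ({7, 8, 12, 18} : Set ℕ) :=
      AddSubmonoid.subset_closure (by simp)
    have h8 : (8 : ℕ) ∈ AddSubmonoid.closure ({7, 8, 12, 18} : Set ℕ) :=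
      AddSubmonoid.subset_closure (by simp)
    have h12 : (12 : ℕ) ∈ AddSubmonoid.closure ({7, 8, 12, 18} : Set ℕ) :=
      AddSubmonoid.subset_closure (by simp)
    rcases hx with rfl | rfl | rfl | rfl | rfl | rfl | rfl | hx
    · exact zero_mem _
    · exact h7
    · exact h8
    · exact h12
    · have : (14 : ℕ) = 7 + 7 := by norm_num
      rw [this]; exact add_mem h7 h7
    · have : (15 : ℕ) = 7 + 8 := by norm_num
      rw [this]; exact add_mem h7 h8
    · have : (16 : ℕ) = 8 + 8 := by norm_num
      rw [this]; exact add_mem h8 h8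
    · exact ge18 x hx

lemma genU : genSG {4, 6, 7, 9} = Uset := by
  apply Set.Subset.antisymm
  · have hle : AddSubmonoid.closure ({4, 6, 7, 9} : Set ℕ) ≤ UM := by
      rw [AddSubmonoid.closure_le]
      intro x hx
      simp only [Set.mem_insert_iff, Set.mem_singleton_iff] at hx
      show x ∈ Uset
      simp only [Uset, Set.mem_setOf_eq]
      omega
    exact fun x hx => hle hx
  · intro x hx
    simp only [Uset, Set.mem_setOf_eq] at hx
    have h4 : (4 : ℕ) ∈ AddSubmonoid.closure ({4, 6, 7, 9} : Set ℕ) :=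
      AddSubmonoid.subset_closure (by simp)
    have h6 : (6 : ℕ) ∈ AddSubmonoid.closure ({4, 6, 7, 9} : Set ℕ) :=
      AddSubmonoid.subset_closure (by simp)
    have h7 : (7 : ℕ) ∈ AddSubmonoid.closure ({4, 6, 7, 9} : Set ℕ) :=
      AddSubmonoid.subset_closure (by simp)
    rcases hx with rfl | rfl | rfl | rfl | hx
    · exact zero_mem _
    · exact h4
    · exact h6
    · exact h7
    · exact ge8 x hx

lemma genus_bound (Ht : NumSemigroup) (S : Finset ℕ) (h : Ht.carrierᶜ ⊆ ↑S) :
    Ht.genus ≤ S.card := by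
  have := Set.ncard_le_ncard h S.finite_toSet
  rwa [Set.ncard_coe_finset] at this

theorem stmt14 :
    (genSG {7, 8, 12, 18})ᶜ.ncard = 11 ∧
    d2 (genSG {7, 8, 12, 18}) = genSG {4, 6, 7, 9} ∧
    ∀ (Ht : NumSemigroup) (n : ℕ),
      d2 Ht.carrier = genSG {4, 6, 7, 9} → Ht.IsLeastOdd n → n ≤ 7 →
      Ht.genus ≤ 11 := by
  refine ⟨?_, ?_, ?_⟩
  · rw [genT]
    have hc : Tsetᶜ = (({1, 2, 3, 4, 5, 6, 9, 10, 11, 13, 17} : Finset ℕ) : Set ℕ) := by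
      ext x
      simp only [Tset, Set.mem_compl_iff, Set.mem_setOf_eq, Finset.coe_insert,
        Set.mem_insert_iff, Finset.coe_singleton, Set.mem_singleton_iff]
      omega
    rw [hc, Set.ncard_coe_finset]
    rfl
  · rw [genT, genU]
    ext x
    simp only [d2, Tset, Uset, Set.mem_setOf_eq]
    omega
  · intro Ht n hd2 hlo hn7
    obtain ⟨⟨hnH, hnodd⟩, -⟩ := hlo
    have hiff : ∀ y : ℕ, 2 * y ∈ Ht.carrier ↔ (y = 0 ∨ y = 4 ∨ y = 6 ∨ y = 7 ∨ 8 ≤ y) := by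
      intro y
      have h1 : (2 * y ∈ Ht.carrier) ↔ y ∈ d2 Ht.carrier := Iff.rfl
      rw [h1, hd2, genU]
      exact Iff.rfl
    have key : ∀ x, x ∉ Ht.carrier →
        ((x = 2 ∨ x = 4 ∨ x = 6 ∨ x = 10) ∨
          (x % 2 = 1 ∧ (x < n ∨ x = n + 2 ∨ x = n + 4 ∨ x = n + 6 ∨ x = n + 10))) := by
      intro x hx
      rcases Nat.even_or_odd x with he | ho
      · obtain ⟨y, rfl⟩ := he
        have h2 : ¬ (2 * y ∈ Ht.carrier) := by rwa [two_mul]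
        rw [hiff] at h2
        left; omega
      · right
        refine ⟨Nat.odd_iff.mp ho, ?_⟩
        rcases lt_or_ge x n with h | h
        · exact Or.inl h
        · have hn2 : n % 2 = 1 := Nat.odd_iff.mp hnodd
          have hx2 : x % 2 = 1 := Nat.odd_iff.mp ho
          set k := (x - n) / 2 with hk
          have hxk : x = n + 2 * k := by omega
          have h2 : ¬ (2 * k ∈ Ht.carrier) := by
            intro hc
            exact hx (hxk ▸ Ht.add_mem n hnH (2 * k) hc)
          rw [hiff] at h2
          omega
    have hn2 : n % 2 = 1 := Nat.odd_iff.mp hnodd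
    have hcases : n = 1 ∨ n = 3 ∨ n = 5 ∨ n = 7 := by omega
    rcases hcases with rfl | rfl | rfl | rfl
    · refine le_trans (genus_bound Ht {2, 3, 4, 5, 6, 7, 10, 11} ?_) (by decide)
      intro x hx
      have := key x hx
      simp only [Finset.coe_insert, Set.mem_insert_iff, Finset.coe_singleton,
        Set.mem_singleton_iff]
      omega
    · refine le_trans (genus_bound Ht {1, 2, 4, 5, 6, 7, 9, 10, 13} ?_) (by decide)
      intro x hx
      have := key x hx
      simp only [Finset.coe_insert, Set.mem_insert_iff, Finset.coe_singleton,
        Set.mem_singleton_iff]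
      omega
    · refine le_trans (genus_bound Ht {1, 2, 3, 4, 6, 7, 9, 10, 11, 15} ?_) (by decide)
      intro x hx
      have := key x hx
      simp only [Finset.coe_insert, Set.mem_insert_iff, Finset.coe_singleton,
        Set.mem_singleton_iff]
      omega
    · refine le_trans (genus_bound Ht {1, 2, 3, 4, 5, 6, 9, 10, 11, 13, 17} ?_) (by decide)
      intro x hx
      have := key x hx
      simp only [Finset.coe_insert, Set.mem_insert_iff, Finset.coe_singleton,
        Set.mem_singleton_iff]
      omega
end

section
/- Let H = ⟨3,5⟩ and let n ≥ 11 be odd. Then S(2H + nℕ₀) = {6, 10, 20, n, n+10, n+20}, and any numerical semigroup H̃ with d₂(H̃) = H, n(H̃) = n, and g(H̃) = 6 + (n−1)/2 equals either 2H + nℕ₀ + (n+8)ℕ₀ or 2H + nℕ₀ + (n+4)ℕ₀. -/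
lemma mem_H (x : ℕ) : x ∈ genSG {3,5} ↔ ¬(x = 1 ∨ x = 2 ∨ x = 4 ∨ x = 7) := by
  constructor
  · intro hx
    rw [genSG, SetLike.mem_coe, AddSubmonoid.mem_closure_pair] at hx
    obtain ⟨a, b, hab⟩ := hx
    simp only [smul_eq_mul] at hab
    omega
  · intro hx
    rw [genSG, SetLike.mem_coe, AddSubmonoid.mem_closure_pair]
    have : ∃ a b : ℕ, a * 3 + b * 5 = x := by
      rcases h3 : x % 3 with _ | _ | k
      · exact ⟨x / 3, 0, by omega⟩
      · exact ⟨(x - 10) / 3, 2, by omega⟩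
      · exact ⟨(x - 5) / 3, 1, by omega⟩
    obtain ⟨a, b, hab⟩ := this
    exact ⟨a, b, by simpa [smul_eq_mul] using hab⟩

lemma mul_facts (n i : ℕ) (hodd : n % 2 = 1) :
    ∃ a, n * i = a ∧ a % 2 = i % 2 ∧ (i = 0 → a = 0) ∧ (i = 1 → a = n) ∧
      (2 ≤ i → 2 * n ≤ a) ∧ (3 ≤ i → 3 * n ≤ a) := by
  refine ⟨n * i, rfl, ?_, ?_, ?_, ?_, ?_⟩
  · rw [Nat.mul_mod, hodd, one_mul]; omega
  · rintro rfl; simp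
  · rintro rfl; simp
  · intro h; calc 2 * n = n * 2 := by ring
      _ ≤ n * i := Nat.mul_le_mul_left n h
  · intro h; calc 3 * n = n * 3 := by ring
      _ ≤ n * i := Nat.mul_le_mul_left n h

lemma mem_dA (n : ℕ) (hodd : n % 2 = 1) (hn : 11 ≤ n) (x : ℕ) :
    x ∈ doubleAdd (genSG {3,5}) n ↔
      (x % 2 = 0 ∧ ¬(x = 2 ∨ x = 4 ∨ x = 8 ∨ x = 14)) ∨
      (x % 2 = 1 ∧ n ≤ x ∧ ¬(x = n+2 ∨ x = n+4 ∨ x = n+8 ∨ x = n+14)) := by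
  constructor
  · rintro ⟨h, hh, i, rfl⟩
    rw [mem_H] at hh
    obtain ⟨a, ha, h1, h2, h3, h4, h5⟩ := mul_facts n i hodd
    rw [ha]
    omega
  · rintro (⟨he, hx⟩ | ⟨ho, hge, hx⟩)
    · exact ⟨x / 2, (mem_H _).2 (by omega), 0, by omega⟩
    · exact ⟨(x - n) / 2, (mem_H _).2 (by omega), 1, by omega⟩

lemma mem_dA2_8 (n : ℕ) (hodd : n % 2 = 1) (hn : 11 ≤ n) (x : ℕ) :
    x ∈ doubleAdd2 (genSG {3,5}) n (n + 8) ↔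
      (x % 2 = 0 ∧ ¬(x = 2 ∨ x = 4 ∨ x = 8 ∨ x = 14)) ∨
      (x % 2 = 1 ∧ n ≤ x ∧ ¬(x = n+2 ∨ x = n+4)) := by
  constructor
  · rintro ⟨h, hh, i, j, rfl⟩
    rw [mem_H] at hh
    obtain ⟨a, ha, ha1, ha2, ha3, ha4, ha5⟩ := mul_facts n i hodd
    obtain ⟨b, hb, hb1, hb2, hb3, hb4, hb5⟩ := mul_facts (n+8) j (by omega)
    rw [ha, hb]
    omega
  · rintro (⟨he, hx⟩ | ⟨ho, hge, hx⟩)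
    · exact ⟨x / 2, (mem_H _).2 (by omega), 0, 0, by omega⟩
    · by_cases h8 : x = n + 8
      · exact ⟨0, (mem_H _).2 (by omega), 0, 1, by omega⟩
      by_cases h14 : x = n + 14
      · exact ⟨3, (mem_H _).2 (by omega), 0, 1, by omega⟩
      exact ⟨(x - n) / 2, (mem_H _).2 (by omega), 1, 0, by omega⟩

lemma mem_dA2_4 (n : ℕ) (hodd : n % 2 = 1) (hn : 11 ≤ n) (x : ℕ) :
    x ∈ doubleAdd2 (genSG {3,5}) n (n + 4) ↔
      (x % 2 = 0 ∧ ¬(x = 2 ∨ x = 4 ∨ x = 8 ∨ x = 14)) ∨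
      (x % 2 = 1 ∧ n ≤ x ∧ ¬(x = n+2 ∨ x = n+8)) := by
  constructor
  · rintro ⟨h, hh, i, j, rfl⟩
    rw [mem_H] at hh
    obtain ⟨a, ha, ha1, ha2, ha3, ha4, ha5⟩ := mul_facts n i hodd
    obtain ⟨b, hb, hb1, hb2, hb3, hb4, hb5⟩ := mul_facts (n+4) j (by omega)
    rw [ha, hb]
    omega
  · rintro (⟨he, hx⟩ | ⟨ho, hge, hx⟩)
    · exact ⟨x / 2, (mem_H _).2 (by omega), 0, 0, by omega⟩
    · by_cases h4 : x = n + 4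
      · exact ⟨0, (mem_H _).2 (by omega), 0, 1, by omega⟩
      by_cases h14 : x = n + 14
      · exact ⟨5, (mem_H _).2 (by omega), 0, 1, by omega⟩
      exact ⟨(x - n) / 2, (mem_H _).2 (by omega), 1, 0, by omega⟩

theorem stmt15 (n : ℕ) (hodd : Odd n) (hn : 11 ≤ n) :
    stdBasis (doubleAdd (genSG {3, 5}) n) 6 =
      {6, 10, 20, n, n + 10, n + 20} ∧
    ∀ Ht : NumSemigroup, d2 Ht.carrier = genSG {3, 5} → Ht.IsLeastOdd n →
      Ht.genus = 6 + (n - 1) / 2 →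
      Ht.carrier = doubleAdd2 (genSG {3, 5}) n (n + 8) ∨
      Ht.carrier = doubleAdd2 (genSG {3, 5}) n (n + 4) := by
  have hodd' : n % 2 = 1 := Nat.odd_iff.mp hodd
  constructor
  · -- standard basis
    have hA := mem_dA n hodd' hn
    have L4 : IsLeast {h | h ∈ doubleAdd (genSG {3,5}) n ∧ h % 6 = 4} 10 :=
      ⟨⟨(hA 10).2 (by omega), by omega⟩, fun y hy => by
        have := (hA y).1 hy.1; have := hy.2; omega⟩
    have L2 : IsLeast {h | h ∈ doubleAdd (genSG {3,5}) n ∧ h % 6 = 2} 20 :=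
      ⟨⟨(hA 20).2 (by omega), by omega⟩, fun y hy => by
        have := (hA y).1 hy.1; have := hy.2; omega⟩
    have Ln : IsLeast {h | h ∈ doubleAdd (genSG {3,5}) n ∧ h % 6 = n % 6} n :=
      ⟨⟨(hA n).2 (by omega), by omega⟩, fun y hy => by
        have := (hA y).1 hy.1; have := hy.2; omega⟩
    have Ln10 : IsLeast {h | h ∈ doubleAdd (genSG {3,5}) n ∧ h % 6 = (n+4) % 6} (n+10) :=
      ⟨⟨(hA (n+10)).2 (by omega), by omega⟩, fun y hy => by
        have := (hA y).1 hy.1; have := hy.2; omega⟩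
    have Ln20 : IsLeast {h | h ∈ doubleAdd (genSG {3,5}) n ∧ h % 6 = (n+2) % 6} (n+20) :=
      ⟨⟨(hA (n+20)).2 (by omega), by omega⟩, fun y hy => by
        have := (hA y).1 hy.1; have := hy.2; omega⟩
    ext x
    simp only [stdBasis, Set.mem_insert_iff, Set.mem_setOf_eq, Set.mem_singleton_iff]
    constructor
    · rintro (rfl | ⟨i, hi0, hi6, hL⟩)
      · tauto
      · have hi : i = 4 ∨ i = 2 ∨ i = n % 6 ∨ i = (n+4) % 6 ∨ i = (n+2) % 6 := by omega
        rcases hi with rfl | rfl | rfl | rfl | rfl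
        · have := hL.unique L4; tauto
        · have := hL.unique L2; tauto
        · have := hL.unique Ln; tauto
        · have := hL.unique Ln10; tauto
        · have := hL.unique Ln20; tauto
    · rintro (rfl | rfl | rfl | h | h | h)
      · exact Or.inl rfl
      · exact Or.inr ⟨4, by omega, by omega, L4⟩
      · exact Or.inr ⟨2, by omega, by omega, L2⟩
      · rw [h]; exact Or.inr ⟨n % 6, by omega, by omega, Ln⟩
      · rw [h]; exact Or.inr ⟨(n+4) % 6, by omega, by omega, Ln10⟩
      · rw [h]; exact Or.inr ⟨(n+2) % 6, by omega, by omega, Ln20⟩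
  · -- classification
    intro Ht hd2 hlo hg
    have hd2' : ∀ y : ℕ, 2 * y ∈ Ht.carrier ↔ ¬(y = 1 ∨ y = 2 ∨ y = 4 ∨ y = 7) := by
      intro y
      rw [show (2 * y ∈ Ht.carrier) = (y ∈ d2 Ht.carrier) from rfl, hd2, mem_H]
    -- even membership
    have heven : ∀ y : ℕ, y % 2 = 0 → (y ∈ Ht.carrier ↔ ¬(y = 2 ∨ y = 4 ∨ y = 8 ∨ y = 14)) := by
      intro y hy
      have h2 := hd2' (y / 2)
      rw [show 2 * (y / 2) = y by omega] at h2
      rw [h2]; constructor <;> omega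
    have nE : n ∈ Ht.carrier := hlo.1.1
    have nleast : ∀ y ∈ Ht.carrier, y % 2 = 1 → n ≤ y := by
      intro y hy h1
      exact hlo.2 ⟨hy, Nat.odd_iff.mpr h1⟩
    have hoddmem : ∀ h : ℕ, ¬(h = 1 ∨ h = 2 ∨ h = 4 ∨ h = 7) → n + 2 * h ∈ Ht.carrier :=
      fun h hh => Ht.add_mem n nE _ ((hd2' h).2 hh)
    -- odd gaps above n
    have hgap : ∀ x : ℕ, x % 2 = 1 → n ≤ x → x ∉ Ht.carrier →
        (x = n+2 ∨ x = n+4 ∨ x = n+8 ∨ x = n+14) := by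
      intro x hx1 hx2 hx3
      by_contra hne
      apply hx3
      have := hoddmem ((x - n) / 2) (by omega)
      rwa [show n + 2 * ((x - n) / 2) = x by omega] at this
    set T : Set ℕ := ({n+2, n+4, n+8, n+14} : Set ℕ) ∩ Ht.carrierᶜ with hT
    have hTfin : T.Finite :=
      Set.Finite.inter_of_left (Set.toFinite _) _
    have hcomp : Ht.carrierᶜ = (({2,4,8,14} : Set ℕ) ∪ {x | x % 2 = 1 ∧ x < n}) ∪ T := by
      ext x
      simp only [hT, Set.mem_union, Set.mem_inter_iff, Set.mem_compl_iff, Set.mem_insert_iff,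
        Set.mem_singleton_iff, Set.mem_setOf_eq]
      constructor
      · intro hx
        by_cases hpar : x % 2 = 0
        · have := (heven x hpar); left; left; tauto
        · by_cases hlt : x < n
          · exact Or.inl (Or.inr ⟨by omega, hlt⟩)
          · exact Or.inr ⟨by have := hgap x (by omega) (by omega) hx; tauto, hx⟩
      · rintro ((h | ⟨h1, h2⟩) | ⟨h1, h2⟩)
        · intro hx; have := (heven x (by omega)).1 hx; tauto
        · intro hx; have := nleast x hx h1; omega
        · exact h2
    -- cardinalities
    have hfS2 : ({x : ℕ | x % 2 = 1 ∧ x < n}).Finite := by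
      apply Set.Finite.subset (Set.finite_Iio n)
      intro a ha; simp only [Set.mem_setOf_eq] at ha; exact ha.2
    have hdS12 : Disjoint ({2,4,8,14} : Set ℕ) {x : ℕ | x % 2 = 1 ∧ x < n} := by
      rw [Set.disjoint_left]
      intro a ha hb
      simp only [Set.mem_insert_iff, Set.mem_singleton_iff] at ha
      simp only [Set.mem_setOf_eq] at hb
      omega
    have hS1 : (({2,4,8,14} : Set ℕ) ∪ {x | x % 2 = 1 ∧ x < n}).ncard = 4 + (n-1)/2 := by
      rw [Set.ncard_union_eq hdS12 (Set.toFinite _) hfS2]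
      congr 1
      · rw [show ({2,4,8,14} : Set ℕ) = ↑({2,4,8,14} : Finset ℕ) by simp, Set.ncard_coe_finset]
        rfl
      · rw [show {x : ℕ | x % 2 = 1 ∧ x < n} =
            ↑((Finset.range ((n-1)/2)).image (fun k => 2*k+1)) by
          ext x
          simp only [Finset.coe_image, Finset.coe_range, Set.mem_image, Set.mem_Iio,
            Set.mem_setOf_eq]
          constructor
          · intro ⟨h1, h2⟩; exact ⟨x / 2, by omega, by omega⟩
          · rintro ⟨k, hk, rfl⟩; omega]
        rw [Set.ncard_coe_finset, Finset.card_image_of_injective _ (fun a b h => by omega),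
          Finset.card_range]
    have hTcard : T.ncard = 2 := by
      have hdisj : Disjoint (({2,4,8,14} : Set ℕ) ∪ {x | x % 2 = 1 ∧ x < n}) T := by
        rw [Set.disjoint_left]
        rintro a (ha | ha) ⟨hb, _⟩ <;>
          simp only [Set.mem_insert_iff, Set.mem_singleton_iff, Set.mem_setOf_eq] at ha hb <;>
          omega
      have hfin1 : (({2,4,8,14} : Set ℕ) ∪ {x | x % 2 = 1 ∧ x < n}).Finite :=
        Set.Finite.union (Set.toFinite _) hfS2
      have := hg
      rw [NumSemigroup.genus, hcomp, Set.ncard_union_eq hdisj hfin1 hTfin, hS1] at this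
      omega
    -- n+2 is a gap
    have h6E : (6 : ℕ) ∈ Ht.carrier := by rw [show (6:ℕ) = 2*3 from rfl, hd2']; omega
    have h10E : (10 : ℕ) ∈ Ht.carrier := by rw [show (10:ℕ) = 2*5 from rfl, hd2']; omega
    have h12E : (12 : ℕ) ∈ Ht.carrier := by rw [show (12:ℕ) = 2*6 from rfl, hd2']; omega
    have hn2 : n + 2 ∉ Ht.carrier := by
      intro h2
      have h8 : n + 8 ∈ Ht.carrier := by
        have := Ht.add_mem _ h2 _ h6E; rwa [show n+2+6 = n+8 by omega] at this
      have h14 : n + 14 ∈ Ht.carrier := by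
        have := Ht.add_mem _ h2 _ h12E; rwa [show n+2+12 = n+14 by omega] at this
      have hsub : T ⊆ {n+4} := by
        rintro x ⟨hx1, hx2⟩
        simp only [Set.mem_insert_iff, Set.mem_singleton_iff] at hx1 ⊢
        rcases hx1 with rfl | rfl | rfl | rfl
        · exact absurd h2 hx2
        · rfl
        · exact absurd h8 hx2
        · exact absurd h14 hx2
      have := Set.ncard_le_ncard hsub (Set.finite_singleton _)
      rw [hTcard, Set.ncard_singleton] at this
      omega
    by_cases h4 : n + 4 ∈ Ht.carrier
    · -- right case : gaps n+2, n+8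
      right
      have h14 : n + 14 ∈ Ht.carrier := by
        have := Ht.add_mem _ h4 _ h10E; rwa [show n+4+10 = n+14 by omega] at this
      have h8 : n + 8 ∉ Ht.carrier := by
        intro h8
        have hsub : T ⊆ {n+2} := by
          rintro x ⟨hx1, hx2⟩
          simp only [Set.mem_insert_iff, Set.mem_singleton_iff] at hx1 ⊢
          rcases hx1 with rfl | rfl | rfl | rfl
          · rfl
          · exact absurd h4 hx2
          · exact absurd h8 hx2
          · exact absurd h14 hx2
        have := Set.ncard_le_ncard hsub (Set.finite_singleton _)
        rw [hTcard, Set.ncard_singleton] at this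
        omega
      ext x
      rw [mem_dA2_4 n hodd' hn x]
      constructor
      · intro hx
        by_cases hpar : x % 2 = 0
        · exact Or.inl ⟨hpar, (heven x hpar).1 hx⟩
        · refine Or.inr ⟨by omega, nleast x hx (by omega), ?_⟩
          rintro (rfl | rfl)
          · exact hn2 hx
          · exact h8 hx
      · rintro (⟨hpar, hx⟩ | ⟨hpar, hge, hx⟩)
        · exact (heven x hpar).2 hx
        · by_contra hxE
          have := hgap x hpar hge hxE
          rcases this with rfl | rfl | rfl | rfl
          · exact hx (Or.inl rfl)
          · exact hxE h4
          · exact hx (Or.inr rfl)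
          · exact hxE h14
    · -- left case : gaps n+2, n+4
      left
      have h8 : n + 8 ∈ Ht.carrier := by
        by_contra h8
        have hsub : ({n+2, n+4, n+8} : Set ℕ) ⊆ T := by
          intro x hx
          simp only [Set.mem_insert_iff, Set.mem_singleton_iff] at hx
          rcases hx with rfl | rfl | rfl
          · exact ⟨by simp, hn2⟩
          · exact ⟨by simp, h4⟩
          · exact ⟨by simp, h8⟩
        have hle := Set.ncard_le_ncard hsub hTfin
        have h3 : ({n+2, n+4, n+8} : Set ℕ).ncard = 3 := by
          rw [Set.ncard_insert_of_notMem (by simp only [Set.mem_insert_iff, Set.mem_singleton_iff]; omega)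
              ((Set.finite_singleton _).insert _),
            Set.ncard_insert_of_notMem (by simp only [Set.mem_insert_iff, Set.mem_singleton_iff]; omega) (Set.finite_singleton _),
            Set.ncard_singleton]
        rw [h3, hTcard] at hle
        omega
      have h14 : n + 14 ∈ Ht.carrier := by
        have := Ht.add_mem _ h8 _ h6E; rwa [show n+8+6 = n+14 by omega] at this
      ext x
      rw [mem_dA2_8 n hodd' hn x]
      constructor
      · intro hx
        by_cases hpar : x % 2 = 0
        · exact Or.inl ⟨hpar, (heven x hpar).1 hx⟩
        · refine Or.inr ⟨by omega, nleast x hx (by omega), ?_⟩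
          rintro (rfl | rfl)
          · exact hn2 hx
          · exact h4 hx
      · rintro (⟨hpar, hx⟩ | ⟨hpar, hge, hx⟩)
        · exact (heven x hpar).2 hx
        · by_contra hxE
          have := hgap x hpar hge hxE
          rcases this with rfl | rfl | rfl | rfl
          · exact hx (Or.inl rfl)
          · exact hx (Or.inr rfl)
          · exact hxE h8
          · exact hxE h14
end

section
/- Let H = ⟨4,6,7,9⟩ and let n ≥ 9 be odd. Then S(2H + nℕ₀) = {8, 12, 14, 18, n, n+12, n+14, n+18}. -/
/-! `H = ⟨4, 6, 7, 9⟩ = {0, 4} ∪ [6, ∞)` contains `n`, so `2H + nℕ₀ = 2H ∪ (2H + n)`: its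
elements are the even numbers `0, 8, ≥ 12` and the odd numbers `n, n + 8, ≥ n + 12`. Reading off
the least element of each nonzero residue class mod 8 gives the basis. -/

theorem AddSubmonoid.mem_of_Ico_subset {S : AddSubmonoid ℕ} {a c x : ℕ} (ha₀ : 0 < a)
    (ha : a ∈ S) (hwindow : Set.Ico c (c + a) ⊆ S) (hx : c ≤ x) : x ∈ S := by
  induction x using Nat.strong_induction_on with
  | _ x ih =>
    by_cases hxa : x < c + a
    · exact hwindow ⟨hx, hxa⟩
    · have hsub : x - a ∈ S := ih (x - a) (by omega) (by omega)
      rw [show x = x - a + a by omega]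
      exact add_mem hsub ha

theorem mem_genSG_four_six_seven_nine {x : ℕ} :
    x ∈ genSG {4, 6, 7, 9} ↔ x = 0 ∨ x = 4 ∨ 6 ≤ x := by
  constructor
  · intro hx
    induction hx using AddSubmonoid.closure_induction with
    | mem x h =>
      simp only [Set.mem_insert_iff, Set.mem_singleton_iff] at h
      omega
    | zero => exact Or.inl rfl
    | add x y _ _ hx hy => omega
  · set S := AddSubmonoid.closure ({4, 6, 7, 9} : Set ℕ)
    have h4 : 4 ∈ S := AddSubmonoid.subset_closure (by simp)
    have h6 : 6 ∈ S := AddSubmonoid.subset_closure (by simp)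
    have h7 : 7 ∈ S := AddSubmonoid.subset_closure (by simp)
    have h9 : 9 ∈ S := AddSubmonoid.subset_closure (by simp)
    have hwindow : Set.Ico 6 (6 + 4) ⊆ S := by
      rintro x ⟨hlo, hhi⟩
      interval_cases x
      exacts [h6, h7, S.add_mem h4 h4, h9]
    rintro (rfl | rfl | hx)
    exacts [S.zero_mem, h4, S.mem_of_Ico_subset (by norm_num) h4 hwindow hx]

/-- Split `i` by parity: `2h + n(2j + r) = 2(h + nj) + nr`. -/
theorem mem_doubleAdd_iff {S : AddSubmonoid ℕ} {n x : ℕ} (hn : n ∈ S) :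
    x ∈ doubleAdd (S : Set ℕ) n ↔ ∃ h ∈ S, x = 2 * h ∨ x = 2 * h + n := by
  constructor
  · rintro ⟨h, hh, i, rfl⟩
    have hnj : ∀ j, h + n * j ∈ S := fun j =>
      S.add_mem hh (by rw [mul_comm, ← smul_eq_mul]; exact S.nsmul_mem hn j)
    rcases Nat.even_or_odd' i with ⟨j, rfl | rfl⟩
    · exact ⟨h + n * j, hnj j, Or.inl (by ring)⟩
    · exact ⟨h + n * j, hnj j, Or.inr (by ring)⟩
  · rintro ⟨h, hh, rfl | rfl⟩
    · exact ⟨h, hh, 0, by ring⟩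
    · exact ⟨h, hh, 1, by ring⟩

theorem mem_doubleAdd_genSG_iff {n x : ℕ} (hodd : Odd n) (hn : 6 ≤ n) :
    x ∈ doubleAdd (genSG {4, 6, 7, 9}) n ↔
      x = 0 ∨ x = 8 ∨ (12 ≤ x ∧ x % 2 = 0) ∨
        x = n ∨ x = n + 8 ∨ (n + 12 ≤ x ∧ (x - n) % 2 = 0) := by
  have hn2 : n % 2 = 1 := Nat.odd_iff.mp hodd
  have hnS : n ∈ AddSubmonoid.closure ({4, 6, 7, 9} : Set ℕ) :=
    mem_genSG_four_six_seven_nine.2 (by omega)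
  rw [genSG, mem_doubleAdd_iff hnS]
  constructor
  · rintro ⟨h, hh, hx⟩
    have := mem_genSG_four_six_seven_nine.1 hh
    omega
  · intro hx
    refine ⟨if x % 2 = 0 then x / 2 else (x - n) / 2, mem_genSG_four_six_seven_nine.2 ?_, ?_⟩ <;>
      split_ifs <;> omega

theorem mem_stdBasis_iff {A : Set ℕ} {m s : ℕ} (hm : 0 < m) :
    s ∈ stdBasis A m ↔ s = m ∨ (s ∈ A ∧ s % m ≠ 0 ∧ ∀ a ∈ A, a % m = s % m → s ≤ a) := by
  simp only [stdBasis, Set.mem_insert_iff, Set.mem_ofPred_eq, IsLeast, mem_lowerBounds]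
  constructor
  · rintro (rfl | ⟨i, hi₀, -, ⟨hsA, rfl⟩, hmin⟩)
    · exact Or.inl rfl
    · exact Or.inr ⟨hsA, hi₀.ne', fun a ha hai => hmin a ⟨ha, hai⟩⟩
  · rintro (rfl | ⟨hsA, hs₀, hmin⟩)
    · exact Or.inl rfl
    · exact Or.inr ⟨s % m, Nat.pos_of_ne_zero hs₀, Nat.mod_lt s hm, ⟨hsA, rfl⟩,
        fun a ⟨ha, has⟩ => hmin a ha has⟩

theorem stdBasis_eq_insert {A T : Set ℕ} {m : ℕ} (hm : 0 < m)
    (hT : ∀ t ∈ T, t ∈ A ∧ t % m ≠ 0 ∧ ∀ a ∈ A, a % m = t % m → t ≤ a)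
    (hcover : ∀ a ∈ A, a % m ≠ 0 → ∃ t ∈ T, t % m = a % m) :
    stdBasis A m = insert m T := by
  ext s
  rw [mem_stdBasis_iff hm, Set.mem_insert_iff]
  refine or_congr_right ⟨fun ⟨hsA, hs₀, hmin⟩ => ?_, fun ht => hT s ht⟩
  obtain ⟨t, htT, hts⟩ := hcover s hsA hs₀
  obtain ⟨htA, -, htmin⟩ := hT t htT
  rwa [le_antisymm (hmin t htA hts) (htmin s hsA hts.symm)]

theorem stmt17 (n : ℕ) (hodd : Odd n) (hn : 9 ≤ n) :
    stdBasis (doubleAdd (genSG {4, 6, 7, 9}) n) 8 =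
      {8, 12, 14, 18, n, n + 12, n + 14, n + 18} := by
  have hn2 : n % 2 = 1 := Nat.odd_iff.mp hodd
  have hmem := fun x => mem_doubleAdd_genSG_iff (x := x) hodd (by omega)
  refine stdBasis_eq_insert (by norm_num) ?_ ?_
  · simp only [Set.mem_insert_iff, Set.mem_singleton_iff]
    rintro t (rfl | rfl | rfl | rfl | rfl | rfl | rfl) <;>
      exact ⟨(hmem _).2 (by omega), by omega, fun a ha hat => by rw [hmem] at ha; omega⟩
  · intro a ha ha₀
    rw [hmem] at ha
    simp only [Set.mem_insert_iff, Set.mem_singleton_iff, exists_eq_or_imp, exists_eq_left]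
    omega
end
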